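/- arXiv:2302.09194 — 8 statements merged into one kernel-verified Lean document; each statement's English description precedes it below -/
import Mathlib

section
/- Let M be an m×n matrix of real numbers. If there exist two disjoint sets A = {a_1,...,a_ℓ} and B = {b_1,...,b_ℓ} of indices in [m]×[n] such that (i) M_{a_k} < M_{b_k} for each k, (ii) A and B have equally many elements in each row, and (iii) A and B have equally many elements in each column, then M is not expressible as an outer sum x ∘ y of two vectors x ∈ ℝ^m, y ∈ ℝ^n. -/
/-!
Summing the strict inequalities `x_{a_k.1} + y_{a_k.2} < x_{b_k.1} + y_{b_k.2}` over `k` gives a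
strict inequality between two sums; but since `A` and `B` meet every row and every column equally
often, both sums equal `∑ᵢ rᵢ xᵢ + ∑ⱼ cⱼ yⱼ`, with `rᵢ`, `cⱼ` the common row and column counts.
-/

open Finset

theorem sum_comp_eq_of_card_fiber_eq {ι κ M : Type*} [Fintype κ] [DecidableEq κ]
    [AddCommMonoid M] {s : Finset ι} {g g' : ι → κ}
    (h : ∀ j, #{i ∈ s | g i = j} = #{i ∈ s | g' i = j}) (f : κ → M) :
    ∑ i ∈ s, f (g i) = ∑ i ∈ s, f (g' i) := by
  simp only [← sum_fiberwise' s g f, ← sum_fiberwise' s g' f, sum_const, h]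

theorem taboo_configuration_not_realizable_general {m n ℓ : ℕ} (hℓ : 0 < ℓ)
    (M : Fin m × Fin n → ℝ)
    (a b : Fin ℓ → Fin m × Fin n)
    (hlt : ∀ k : Fin ℓ, M (a k) < M (b k))
    (hrow : ∀ i : Fin m,
      (univ.filter (fun k : Fin ℓ => (a k).1 = i)).card =
        (univ.filter (fun k : Fin ℓ => (b k).1 = i)).card)
    (hcol : ∀ j : Fin n,
      (univ.filter (fun k : Fin ℓ => (a k).2 = j)).card =
        (univ.filter (fun k : Fin ℓ => (b k).2 = j)).card) :
    ¬ ∃ (x : Fin m → ℝ) (y : Fin n → ℝ),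
        ∀ p q : Fin m × Fin n, M p < M q ↔ x p.1 + y p.2 < x q.1 + y q.2 := by
  rintro ⟨x, y, hxy⟩
  have hsum : ∑ k, (x (a k).1 + y (a k).2) < ∑ k, (x (b k).1 + y (b k).2) :=
    sum_lt_sum_of_nonempty (univ_nonempty_iff.mpr ⟨⟨0, hℓ⟩⟩) fun k _ => (hxy _ _).mp (hlt k)
  have hx : ∑ k, x (a k).1 = ∑ k, x (b k).1 := sum_comp_eq_of_card_fiber_eq hrow x
  have hy : ∑ k, y (a k).2 = ∑ k, y (b k).2 := sum_comp_eq_of_card_fiber_eq hcol y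
  rw [sum_add_distrib, sum_add_distrib, hx, hy] at hsum
  exact lt_irrefl _ hsum

theorem taboo_configuration_not_realizable {m n ℓ : ℕ} (hℓ : 0 < ℓ)
    (M : Fin m × Fin n → ℝ)
    (a b : Fin ℓ → Fin m × Fin n)
    (ha : Function.Injective a) (hb : Function.Injective b)
    (hdisj : ∀ k k' : Fin ℓ, a k ≠ b k')
    (hlt : ∀ k : Fin ℓ, M (a k) < M (b k))
    (hrow : ∀ i : Fin m,
      (univ.filter (fun k : Fin ℓ => (a k).1 = i)).card =
        (univ.filter (fun k : Fin ℓ => (b k).1 = i)).card)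
    (hcol : ∀ j : Fin n,
      (univ.filter (fun k : Fin ℓ => (a k).2 = j)).card =
        (univ.filter (fun k : Fin ℓ => (b k).2 = j)).card) :
    ¬ ∃ (x : Fin m → ℝ) (y : Fin n → ℝ),
        ∀ p q : Fin m × Fin n, M p < M q ↔ x p.1 + y p.2 < x q.1 + y q.2 :=
  taboo_configuration_not_realizable_general hℓ M a b hlt hrow hcol
end

section
/- Every 2×n standard Young tableau is realizable: for any standard Young tableau T of shape 2×n, there exist increasing vectors x ∈ ℝ^2 and y ∈ ℝ^n with all entries of the outer sum x ∘ y distinct, such that the relative order of the entries of x ∘ y coincides with T. -/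
/-- The outer sum of two vectors, as a function on cells. -/
def outerSum {m n : ℕ} (x : Fin m → ℝ) (y : Fin n → ℝ) (p : Fin m × Fin n) : ℝ :=
  x p.1 + y p.2

/-- `T` is a standard Young tableau of rectangular shape `m × n`:
a bijective filling increasing along rows and down columns. -/
def IsSYT {m n : ℕ} (T : Fin m × Fin n → Fin (m * n)) : Prop :=
  Function.Bijective T ∧
    (∀ p q : Fin m × Fin n, p.1 = q.1 → p.2 < q.2 → T p < T q) ∧
    (∀ p q : Fin m × Fin n, p.2 = q.2 → p.1 < q.1 → T p < T q)

/-- The increasing vectors `x`, `y` realize `T`: the outer sum `x ∘ y` has distinct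
entries whose relative order coincides with `T`. -/
def Realizes {m n : ℕ} (x : Fin m → ℝ) (y : Fin n → ℝ)
    (T : Fin m × Fin n → Fin (m * n)) : Prop :=
  StrictMono x ∧ StrictMono y ∧ Function.Injective (outerSum x y) ∧
    ∀ p q : Fin m × Fin n, T p < T q ↔ outerSum x y p < outerSum x y q

/-- `T` is realizable as the relative order of an outer sum of increasing vectors. -/
def IsRealizable {m n : ℕ} (T : Fin m × Fin n → Fin (m * n)) : Prop :=
  ∃ x y, Realizes x y T

/-- The number of realizable `m × n` standard Young tableaux. -/
noncomputable def rSYTcard (m n : ℕ) : ℕ :=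
  Nat.card {T : Fin m × Fin n → Fin (m * n) // IsSYT T ∧ IsRealizable T}

/-- The number of `m × n` standard Young tableaux. -/
noncomputable def SYTcard (m n : ℕ) : ℕ :=
  Nat.card {T : Fin m × Fin n → Fin (m * n) // IsSYT T}

/-! Take `x = (0, 1)`. Then `x ∘ y` realizes `T` exactly when `y` is increasing and, for every top
cell `(0, j)` and bottom cell `(1, k)`, `T (0, j) < T (1, k) ↔ y j < y k + 1`, with no ties. The
relation `T (0, j) < T (1, k)` is antitone in `j`, monotone in `k` and reflexive (columns
increase), and every such relation has a representation of this kind, built one column at a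
time: the next value must lie above finitely many lower bounds and below finitely many upper
bounds, and the monotonicity of the relation puts every lower bound below every upper bound. -/

/-- For the semiorder `k ≺ j :↔ ¬ P j k`, this is a Scott–Suppes representation by the unit
intervals `[y j, y j + 1]`. -/
def IsUnitShiftRep {n : ℕ} (P : Fin n → Fin n → Prop) (y : Fin n → ℝ) : Prop :=
  StrictMono y ∧ ∀ j k, (P j k ↔ y j < y k + 1) ∧ y j ≠ y k + 1

section UnitShiftRep

open Fin Finset

variable {n : ℕ} {P : Fin (n + 1) → Fin (n + 1) → Prop}

theorem IsUnitShiftRep.exists_gt_and_lt_add_one_iff {y : Fin n → ℝ}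
    (hy : IsUnitShiftRep (fun j k ↦ P j.castSucc k.castSucc) y) (hanti : ∀ k, Antitone (P · k))
    (hmono : ∀ j, Monotone (P j)) :
    ∃ v, (∀ k, y k < v) ∧ ∀ k, (P (last n) k.castSucc ↔ v < y k + 1) ∧ v ≠ y k + 1 := by
  classical
  let lower := univ.image y ∪ (univ.filter (¬ P (last n) ·.castSucc)).image (y · + 1)
  let upper := (univ.filter (P (last n) ·.castSucc)).image (y · + 1)
  obtain ⟨v, hlower, hupper⟩ := lower.exists_between' upper <| by
    simp only [lower, upper, mem_union, mem_image, mem_filter, mem_univ, true_and]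
    rintro _ (⟨j, -, rfl⟩ | ⟨j, hj, rfl⟩) _ ⟨k, hk, rfl⟩
    · exact ((hy.2 j k).1).1 (hanti _ (le_last _) hk)
    · have hjk : j < k := lt_of_not_ge fun hkj ↦ hj (hmono _ (castSucc_le_castSucc_iff.2 hkj) hk)
      linarith [hy.1 hjk]
  refine ⟨v, fun k ↦ hlower _ (mem_union_left _ (mem_image_of_mem _ (mem_univ k))), fun k ↦ ?_⟩
  by_cases hk : P (last n) k.castSucc
  · have := hupper _ (mem_image_of_mem _ (mem_filter.2 ⟨mem_univ k, hk⟩))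
    exact ⟨iff_of_true hk this, this.ne⟩
  · have := hlower _ (mem_union_right _ (mem_image_of_mem _ (mem_filter.2 ⟨mem_univ k, hk⟩)))
    exact ⟨iff_of_false hk this.not_gt, this.ne'⟩

theorem IsUnitShiftRep.snoc {y : Fin n → ℝ}
    (hy : IsUnitShiftRep (fun j k ↦ P j.castSucc k.castSucc) y)
    (hmono : ∀ j, Monotone (P j)) (hrefl : ∀ j, P j j) {v : ℝ} (hyv : ∀ k, y k < v)
    (hv : ∀ k, (P (last n) k.castSucc ↔ v < y k + 1) ∧ v ≠ y k + 1) :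
    IsUnitShiftRep P (snoc y v) := by
  refine ⟨fun a b hab ↦ ?_, fun j k ↦ ?_⟩
  · cases b using lastCases with
    | last => cases a using lastCases with
      | last => exact absurd hab (lt_irrefl _)
      | cast a => simpa using hyv a
    | cast b => cases a using lastCases with
      | last => exact absurd hab (not_lt.2 (le_last _))
      | cast a => simpa using hy.1 (castSucc_lt_castSucc_iff.1 hab)
  · cases j using lastCases with
    | last => cases k using lastCases with
      | last => simp [hrefl]
      | cast k => simpa using hv k
    | cast j => cases k using lastCases with
      | last =>
        have hj := hyv j
        simp only [snoc_castSucc, snoc_last]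
        exact ⟨iff_of_true (hmono _ (le_last _) (hrefl _)) (by linarith), by linarith⟩
      | cast k => simpa using hy.2 j k

end UnitShiftRep

theorem exists_isUnitShiftRep : ∀ {n : ℕ} (P : Fin n → Fin n → Prop),
    (∀ k, Antitone (P · k)) → (∀ j, Monotone (P j)) → (∀ j, P j j) → ∃ y, IsUnitShiftRep P y
  | 0, _, _, _, _ => ⟨finZeroElim, fun a ↦ a.elim0, fun j ↦ j.elim0⟩
  | n + 1, P, hanti, hmono, hrefl => by
    obtain ⟨y, hy⟩ := exists_isUnitShiftRep (fun j k : Fin n ↦ P j.castSucc k.castSucc)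
      (fun k _ _ hij ↦ hanti _ (Fin.castSucc_le_castSucc_iff.2 hij))
      (fun j _ _ hkl ↦ hmono _ (Fin.castSucc_le_castSucc_iff.2 hkl)) (fun j ↦ hrefl _)
    obtain ⟨v, hyv, hv⟩ := hy.exists_gt_and_lt_add_one_iff hanti hmono
    exact ⟨_, hy.snoc hmono hrefl hyv hv⟩

theorem Function.Injective.of_lt_iff_lt {α β γ : Type*} [LinearOrder β] [LinearOrder γ]
    {f : α → β} {g : α → γ} (hf : Function.Injective f) (hfg : ∀ p q, f p < f q ↔ g p < g q) :
    Function.Injective g := fun p q hpq ↦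
  hf <| le_antisymm (not_lt.1 fun h ↦ ((hfg q p).1 h).ne' hpq)
    (not_lt.1 fun h ↦ ((hfg p q).1 h).ne hpq)

theorem IsSYT.strictMono_row {m n : ℕ} {T : Fin m × Fin n → Fin (m * n)} (hT : IsSYT T)
    (i : Fin m) : StrictMono fun j ↦ T (i, j) :=
  fun _ _ h ↦ hT.2.1 _ _ rfl h

theorem IsSYT.realizes_of_isUnitShiftRep {n : ℕ} {T : Fin 2 × Fin n → Fin (2 * n)}
    (hT : IsSYT T) {y : Fin n → ℝ} (hy : IsUnitShiftRep (fun j k ↦ T (0, j) < T (1, k)) y) :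
    Realizes ![0, 1] y T := by
  have horder : ∀ p q, T p < T q ↔ outerSum ![0, 1] y p < outerSum ![0, 1] y q := by
    rintro ⟨i, j⟩ ⟨i', k⟩
    have hjk : (T (0, j) < T (1, k) ↔ y j < y k + 1) ∧ y j ≠ y k + 1 := hy.2 j k
    have hkj : (T (0, k) < T (1, j) ↔ y k < y j + 1) ∧ y k ≠ y j + 1 := hy.2 k j
    match i, i' with
    | 0, 0 | 1, 1 => simp [outerSum, (hT.strictMono_row _).lt_iff_lt, hy.1.lt_iff_lt]
    | 0, 1 => simpa [outerSum, add_comm] using hjk.1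
    | 1, 0 =>
      have hne : T (1, j) ≠ T (0, k) := fun h ↦ by simpa using hT.1.1 h
      simp only [outerSum, Matrix.cons_val_zero, Matrix.cons_val_one, zero_add]
      rw [← hne.le_iff_lt, ← not_lt, hkj.1, not_lt, add_comm 1]
      exact ⟨fun h ↦ h.lt_of_ne hkj.2.symm, le_of_lt⟩
  refine ⟨?_, hy.1, hT.1.1.of_lt_iff_lt horder, horder⟩
  simp [Fin.strictMono_iff_lt_succ]

theorem all_2xn_tableaux_realizable (n : ℕ) (T : Fin 2 × Fin n → Fin (2 * n))
    (hT : IsSYT T) : IsRealizable T := by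
  obtain ⟨y, hy⟩ := exists_isUnitShiftRep (fun j k ↦ T (0, j) < T (1, k))
    (fun k _ _ hjj' h ↦ ((hT.strictMono_row 0).monotone hjj').trans_lt h)
    (fun j _ _ hkk' h ↦ h.trans_le ((hT.strictMono_row 1).monotone hkk'))
    (fun j ↦ hT.2.2 (0, j) (1, j) rfl zero_lt_one)
  exact ⟨_, _, hT.realizes_of_isUnitShiftRep hy⟩
end

section
/- The total number of m×n standard Young tableaux equals (mn)! * ∏_{j=0}^{m-1} j!/(n+j)!. -/
/-!
Reading off the row of each entry `0, 1, …, mn - 1` of a standard Young tableau is a bijection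
onto the ballot words with `n` copies of each letter `0, …, m - 1`. Ballot words of content `a`
(an antitone vector, the row lengths of a Young diagram with `N` boxes) are counted by Frobenius'
formula `N! · det (1 / (a i - i + j)!)`: deleting the last letter `x` of a ballot word deletes a
removable box of row `x`, and the determinant `D a` satisfies the same recursion
`N · D a = ∑ x, D (a - e x)`, where the terms of non-removable boxes vanish because two rows of
the matrix coincide or a row is zero. For the rectangle, multiplying row `i` of the transposed
matrix by `(n + i)!` produces the falling factorials of `n + i`, whose determinant is the
Vandermonde determinant `∏ i < j, (j - i) = ∏ j < m, j!`.
-/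

open Finset Matrix Nat

/-- The last box of row `x` of the Young diagram with row lengths `a` can be removed. -/
def IsRemovable {m : ℕ} (a : Fin m → ℕ) (x : Fin m) : Prop :=
  0 < a x ∧ ∀ y, x < y → a y < a x

lemma sub_single_add_single {ι : Type*} [DecidableEq ι] {a : ι → ℕ} {x : ι} (hx : 0 < a x) :
    a - Pi.single x 1 + Pi.single x 1 = a := by
  ext i
  by_cases hi : i = x <;> simp [hi]
  omega

lemma natCast_sub_single {ι : Type*} [DecidableEq ι] {a : ι → ℕ} {x : ι} (hx : 0 < a x) :
    (fun i => ((a - Pi.single x 1 : ι → ℕ) i : ℤ)) =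
      (fun i => (a i : ℤ)) - Pi.single x 1 := by
  ext i
  by_cases hi : i = x <;> simp [hi]
  omega

lemma antitone_sub_single {ι : Type*} [PartialOrder ι] [DecidableEq ι] {a : ι → ℕ}
    (ha : Antitone a) {x : ι} (hx : ∀ y, x < y → a y < a x) :
    Antitone (a - Pi.single x 1) := by
  intro i j hij
  simp only [Pi.sub_apply, Pi.single_apply]
  split_ifs with hj hi hi
  · rw [hi, hj]
  · have := ha hij; omega
  · subst hi
    have := hx j (lt_of_le_of_ne hij (Ne.symm hj)); omega
  · have := ha hij; omega

lemma card_subtype_eq_sum_card_snoc {α : Type*} [Fintype α] {N : ℕ}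
    (P : (Fin (N + 1) → α) → Prop) :
    Nat.card {w // P w} = ∑ x, Nat.card {w : Fin N → α // P (Fin.snoc w x)} := by
  rw [← Nat.card_sigma]
  refine Nat.card_congr ((Equiv.subtypeEquiv (Fin.snocEquiv fun _ => α).symm fun w => ?_).trans
    (Equiv.subtypeProdEquivSigmaSubtype fun x w => P (Fin.snoc w x)))
  simp

/-- `1 / z!`, extended by `0` to negative `z` so that `invFactorial_sub_one` holds for all `z`. -/
noncomputable def invFactorial (z : ℤ) : ℚ := if 0 ≤ z then ((z.toNat)! : ℚ)⁻¹ else 0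

lemma invFactorial_natCast (k : ℕ) : invFactorial k = ((k ! : ℕ) : ℚ)⁻¹ := by
  simp [invFactorial]

lemma invFactorial_of_neg {z : ℤ} (hz : z < 0) : invFactorial z = 0 :=
  if_neg hz.not_ge

lemma invFactorial_sub_one (z : ℤ) : invFactorial (z - 1) = z * invFactorial z := by
  rcases lt_or_ge 0 z with hz | hz
  · obtain ⟨k, rfl⟩ := Int.eq_ofNat_of_zero_le hz.le
    obtain ⟨k, rfl⟩ : ∃ k', k = k' + 1 := Nat.exists_eq_succ_of_ne_zero (by omega)
    rw [Nat.cast_succ, add_sub_cancel_right, invFactorial_natCast, ← Nat.cast_succ,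
      invFactorial_natCast, factorial_succ]
    push_cast
    field_simp
  · rw [invFactorial_of_neg (by omega)]
    rcases hz.lt_or_eq with hz | rfl
    · rw [invFactorial_of_neg hz, mul_zero]
    · simp

lemma factorial_mul_invFactorial_sub (k j : ℕ) :
    (k ! : ℚ) * invFactorial ((k : ℤ) - j) = k.descFactorial j := by
  rcases le_or_gt j k with hjk | hjk
  · rw [← Nat.cast_sub hjk, invFactorial_natCast, ← Nat.factorial_mul_descFactorial hjk]
    push_cast
    field_simp
  · rw [invFactorial_of_neg (by omega), Nat.descFactorial_of_lt hjk]
    simp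

lemma sum_prod_invFactorial_sub_single {ι : Type*} [Fintype ι] [DecidableEq ι] (b : ι → ℤ) :
    ∑ x, ∏ i, invFactorial (b i - (Pi.single x 1 : ι → ℤ) i) =
      ((∑ i, b i : ℤ) : ℚ) * ∏ i, invFactorial (b i) := by
  have hx (x : ι) :
      ∏ i, invFactorial (b i - (Pi.single x 1 : ι → ℤ) i) =
        b x * ∏ i, invFactorial (b i) :=
    calc ∏ i, invFactorial (b i - (Pi.single x 1 : ι → ℤ) i)
        = ∏ i, (if i = x then (b i : ℚ) else 1) * invFactorial (b i) := by
          refine prod_congr rfl fun i _ => ?_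
          rcases eq_or_ne i x with rfl | hix
          · simp [invFactorial_sub_one]
          · simp [hix]
      _ = b x * ∏ i, invFactorial (b i) := by rw [prod_mul_distrib]; simp
  simp_rw [hx, ← sum_mul, Int.cast_sum]

section Frobenius

variable {m : ℕ}

noncomputable def frobeniusDet (a : Fin m → ℤ) : ℚ :=
  (of fun i j : Fin m => invFactorial (a i + j - i)).det

lemma frobeniusDet_zero : frobeniusDet (0 : Fin m → ℤ) = 1 := by
  rw [frobeniusDet, det_of_isUpperTriangular]
  · simp [invFactorial]
  · intro i j hji
    simp only [of_apply, Pi.zero_apply, zero_add]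
    exact invFactorial_of_neg (by simpa using hji)

lemma frobeniusDet_eq_zero_of_sub_eq (a : Fin m → ℤ) {i j : Fin m} (hij : i ≠ j)
    (h : a i - i = a j - j) : frobeniusDet a = 0 := by
  refine det_zero_of_row_eq hij (funext fun k => ?_)
  simp only [of_apply]
  congr 1
  omega

lemma frobeniusDet_eq_zero_of_add_le (a : Fin m → ℤ) {i : Fin m} (h : a i + m ≤ i) :
    frobeniusDet a = 0 :=
  det_eq_zero_of_row_eq_zero i fun j => invFactorial_of_neg (by have := j.isLt; omega)

lemma sum_mul_frobeniusDet (a : Fin m → ℤ) :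
    ((∑ i, a i : ℤ) : ℚ) * frobeniusDet a = ∑ x, frobeniusDet (a - Pi.single x 1) := by
  simp only [frobeniusDet, ← det_transpose (of _), det_apply', transpose_apply, of_apply,
    mul_sum]
  rw [sum_comm]
  refine sum_congr rfl fun σ _ => ?_
  have hσ : ∑ i, (a i + σ i - i) = ∑ i, a i := by
    rw [sum_sub_distrib, sum_add_distrib, Equiv.sum_comp σ (fun i : Fin m => ((i : ℕ) : ℤ)),
      add_sub_cancel_right]
  have hx (x : Fin m) : ∏ i, invFactorial ((a - Pi.single x 1 : Fin m → ℤ) i + σ i - i) =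
      ∏ i, invFactorial ((a i + σ i - i) - (Pi.single x 1 : Fin m → ℤ) i) :=
    prod_congr rfl fun i _ => by rw [Pi.sub_apply]; ring_nf
  rw [← mul_sum, sum_congr rfl fun x _ => hx x,
    sum_prod_invFactorial_sub_single (fun i => a i + σ i - i), ← hσ]
  ring

lemma frobeniusDet_sub_single_eq_zero {a : Fin m → ℕ} (ha : Antitone a) {x : Fin m}
    (hx : ¬ IsRemovable a x) : frobeniusDet ((fun i => (a i : ℤ)) - Pi.single x 1) = 0 := by
  by_cases hlast : (x : ℕ) + 1 < m
  · set y : Fin m := ⟨x + 1, hlast⟩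
    have hxy : x < y := Fin.lt_def.2 (Nat.lt_succ_self _)
    have hy : a y = a x := by
      refine le_antisymm (ha hxy.le) (not_lt.1 fun h => hx ⟨by omega, fun z hz => ?_⟩)
      exact (ha (Fin.le_def.2 (Nat.succ_le_of_lt (Fin.lt_def.1 hz)))).trans_lt h
    refine frobeniusDet_eq_zero_of_sub_eq _ hxy.ne ?_
    simp [hxy.ne', hy, y]
    ring
  · have hax : a x = 0 := by
      by_contra h
      exact hx ⟨by omega, fun y hy => absurd y.isLt (by rw [Fin.lt_def] at hy; omega)⟩
    refine frobeniusDet_eq_zero_of_add_le _ (i := x) ?_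
    simp [hax]
    omega

lemma frobeniusDet_const_mul_prod_factorial (m n : ℕ) :
    frobeniusDet (fun _ : Fin m => (n : ℤ)) * ∏ j ∈ range m, ((n + j)! : ℚ) =
      ∏ j ∈ range m, (j ! : ℚ) := by
  have hdesc : (of fun i j : Fin m => ((n + i : ℕ)! : ℚ) *
        (of fun i j : Fin m => invFactorial (n + j - i))ᵀ i j) =
      of fun i j : Fin m => (descPochhammer ℚ j).eval ((n + i : ℕ) : ℚ) := by
    ext i j
    simp only [transpose_apply, of_apply]
    rw [descPochhammer_eval_eq_descFactorial, ← factorial_mul_invFactorial_sub]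
    push_cast
    ring_nf
  rw [← Fin.prod_univ_eq_prod_range, mul_comm, frobeniusDet, ← det_transpose,
    ← det_mul_column, hdesc, ← det_eval_matrixOfPolynomials_eq_det_vandermonde _ _
      (fun j => descPochhammer_natDegree ℚ j) (fun j => monic_descPochhammer ℚ j)]
  push_cast
  simp_rw [add_comm (n : ℚ), det_vandermonde_add]
  rcases m with _ | m
  · simp
  · rw [det_vandermonde_id_eq_superFactorial, ← prod_range_succ_factorial, Nat.cast_prod]

end Frobenius

section Ballot

variable {N m : ℕ}

def letterCount (w : Fin N → Fin m) (k : ℕ) (i : Fin m) : ℕ :=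
  #{j : Fin N | (j : ℕ) < k ∧ w j = i}

def IsBallot (a : Fin m → ℕ) (w : Fin N → Fin m) : Prop :=
  letterCount w N = a ∧ ∀ k, Antitone (letterCount w k)

lemma letterCount_mono (w : Fin N → Fin m) : Monotone (letterCount w) :=
  fun _ _ hkl _ => card_le_card <| monotone_filter_right _ fun _ _ hj => ⟨by omega, hj.2⟩

lemma letterCount_of_le (w : Fin N → Fin m) {k : ℕ} (hk : N ≤ k) :
    letterCount w k = letterCount w N := by
  ext i
  simp only [letterCount]
  congr 1
  exact filter_congr fun j _ => by omega

lemma letterCount_succ (w : Fin N → Fin m) (p : Fin N) :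
    letterCount w (p + 1) = letterCount w p + Pi.single (w p) 1 := by
  ext i
  simp only [letterCount, Nat.lt_succ_iff_lt_or_eq, or_and_right, filter_or, Pi.add_apply]
  rw [card_union_of_disjoint (disjoint_filter.2 fun j _ h h' => by omega)]
  congr 1
  rw [show ({j | (j : ℕ) = p ∧ w j = i} : Finset (Fin N)) = ({p} : Finset (Fin N)).filter
      (w · = i) by ext; simp [Fin.val_inj], filter_singleton, Pi.single_apply]
  split_ifs with h h' h' <;> simp_all

lemma letterCount_lt_letterCount_succ (w : Fin N → Fin m) (k : Fin N) :
    letterCount w k (w k) < letterCount w (k + 1) (w k) := by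
  simp [letterCount_succ]

lemma letterCount_lt_iff (w : Fin N → Fin m) (k k' : Fin N) :
    letterCount w k (w k) < letterCount w k' (w k) ↔ k < k' := by
  refine ⟨fun h => not_le.1 fun h' => h.not_ge (letterCount_mono w (Fin.le_def.1 h') _),
    fun h => ?_⟩
  exact (letterCount_lt_letterCount_succ w k).trans_le (letterCount_mono w (Fin.lt_def.1 h) _)

lemma letterCount_snoc_of_le (w : Fin N → Fin m) (x : Fin m) {k : ℕ} (hk : k ≤ N) :
    letterCount (Fin.snoc w x : Fin (N + 1) → Fin m) k = letterCount w k := by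
  ext i
  simp only [letterCount, card_filter, Fin.sum_univ_castSucc, Fin.snoc_castSucc,
    Fin.val_castSucc, Fin.val_last]
  simp [show ¬ N < k by omega]

lemma letterCount_snoc (w : Fin N → Fin m) (x : Fin m) :
    letterCount (Fin.snoc w x : Fin (N + 1) → Fin m) (N + 1) =
      letterCount w N + Pi.single x 1 := by
  have := letterCount_succ (Fin.snoc w x : Fin (N + 1) → Fin m) (Fin.last N)
  rwa [Fin.val_last, Fin.snoc_last, letterCount_snoc_of_le w x le_rfl] at this

lemma isBallot_snoc_iff {a : Fin m → ℕ} {w : Fin N → Fin m} {x : Fin m} :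
    IsBallot (a + Pi.single x 1) (Fin.snoc w x) ↔
      IsBallot a w ∧ Antitone (a + Pi.single x 1) := by
  have htop {k : ℕ} (hk : N + 1 ≤ k) :
      letterCount (Fin.snoc w x : Fin (N + 1) → Fin m) k = letterCount w N + Pi.single x 1 := by
    rw [letterCount_of_le _ hk, letterCount_snoc]
  simp only [IsBallot, letterCount_snoc, add_left_inj]
  constructor
  · rintro ⟨rfl, hpre⟩
    refine ⟨⟨rfl, fun k => ?_⟩, htop le_rfl ▸ hpre (N + 1)⟩
    rcases le_total k N with hk | hk
    · exact letterCount_snoc_of_le w x hk ▸ hpre k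
    · rw [letterCount_of_le w hk, ← letterCount_snoc_of_le w x le_rfl]
      exact hpre N
  · rintro ⟨⟨rfl, hpre⟩, hanti⟩
    refine ⟨rfl, fun k => ?_⟩
    rcases le_or_gt k N with hk | hk
    · exact (letterCount_snoc_of_le w x hk).symm ▸ hpre k
    · exact (htop hk).symm ▸ hanti

lemma isBallot_snoc_iff_of_pos {a : Fin m → ℕ} (ha : Antitone a) {x : Fin m} (hx : 0 < a x)
    (w : Fin N → Fin m) : IsBallot a (Fin.snoc w x) ↔ IsBallot (a - Pi.single x 1) w := by
  conv_lhs => rw [← sub_single_add_single hx]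
  rw [isBallot_snoc_iff, sub_single_add_single hx, and_iff_left ha]

lemma IsBallot.isRemovable_of_snoc {a : Fin m → ℕ} {w : Fin N → Fin m} {x : Fin m}
    (hw : IsBallot a (Fin.snoc w x)) : IsRemovable a x := by
  have hanti : Antitone (letterCount w N) := letterCount_snoc_of_le w x le_rfl ▸ hw.2 N
  obtain rfl : letterCount w N + Pi.single x 1 = a := letterCount_snoc w x ▸ hw.1
  refine ⟨by simp, fun y hxy => ?_⟩
  simp only [Pi.add_apply, Pi.single_eq_same, Pi.single_eq_of_ne hxy.ne', add_zero]
  exact Nat.lt_succ_of_le (hanti hxy.le)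

theorem card_isBallot {a : Fin m → ℕ} (ha : Antitone a) (hN : ∑ i, a i = N) :
    (Nat.card {w : Fin N → Fin m // IsBallot a w} : ℚ) =
      N ! * frobeniusDet (fun i => (a i : ℤ)) := by
  induction N generalizing a with
  | zero =>
    obtain rfl : a = 0 := funext fun i => sum_eq_zero_iff.1 hN i (mem_univ i)
    have hall (w : Fin 0 → Fin m) : IsBallot 0 w := by
      have h0 (k : ℕ) : letterCount w k = 0 := by ext; simp [letterCount]
      exact ⟨h0 0, fun k => h0 k ▸ antitone_const⟩
    rw [Nat.card_congr (Equiv.subtypeUnivEquiv hall), Nat.card_unique]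
    simp only [Nat.cast_one, Pi.zero_apply, Nat.cast_zero, factorial_zero, one_mul]
    exact frobeniusDet_zero.symm
  | succ N ih =>
    have hterm (x : Fin m) : (Nat.card {w : Fin N → Fin m // IsBallot a (Fin.snoc w x)} : ℚ) =
        N ! * frobeniusDet ((fun i => (a i : ℤ)) - Pi.single x 1) := by
      by_cases hx : IsRemovable a x
      · have hsum : ∑ i, (a - Pi.single x 1 : Fin m → ℕ) i = N := by
          have := congrArg (fun f : Fin m → ℕ => ∑ i, f i) (sub_single_add_single hx.1)
          simp only [Pi.add_apply, sum_add_distrib, sum_pi_single', mem_univ, if_true] at this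
          omega
        rw [Nat.card_congr (Equiv.subtypeEquivRight (isBallot_snoc_iff_of_pos ha hx.1)),
          ih (antitone_sub_single ha hx.2) hsum, natCast_sub_single hx.1]
      · have : IsEmpty {w : Fin N → Fin m // IsBallot a (Fin.snoc w x)} :=
          ⟨fun w => hx w.2.isRemovable_of_snoc⟩
        rw [Nat.card_of_isEmpty, frobeniusDet_sub_single_eq_zero ha hx]
        simp
    have hsum : ((∑ i, (a i : ℤ) : ℤ) : ℚ) = N + 1 := by exact_mod_cast hN
    rw [card_subtype_eq_sum_card_snoc, Nat.cast_sum, sum_congr rfl fun x _ => hterm x, ← mul_sum,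
      ← sum_mul_frobeniusDet, hsum, factorial_succ]
    push_cast
    ring

end Ballot

section Tableau

variable {m n : ℕ}

noncomputable def wordOf (T : Fin m × Fin n → Fin (m * n)) (hT : Function.Bijective T) :
    Fin (m * n) → Fin m :=
  fun k => ((Equiv.ofBijective T hT).symm k).1

lemma wordOf_apply {T : Fin m × Fin n → Fin (m * n)} (hT : Function.Bijective T)
    (p : Fin m × Fin n) : wordOf T hT (T p) = p.1 := by
  simp [wordOf]

lemma letterCount_wordOf {T : Fin m × Fin n → Fin (m * n)} (hT : Function.Bijective T)
    (k : ℕ) (i : Fin m) :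
    letterCount (wordOf T hT) k i = #{j : Fin n | (T (i, j) : ℕ) < k} := by
  set e := Equiv.ofBijective T hT
  have hT_symm {r : Fin (m * n)} (hr : (e.symm r).1 = i) : T (i, (e.symm r).2) = r := by
    rw [← hr]
    exact e.apply_symm_apply r
  unfold letterCount
  refine card_bij' (fun r _ => (e.symm r).2) (fun j _ => T (i, j)) ?_ ?_ ?_ ?_ <;>
    intro x hx <;> simp only [mem_filter_univ] at hx ⊢
  · rw [hT_symm hx.2]
    exact hx.1
  · exact ⟨hx, wordOf_apply hT _⟩
  · exact hT_symm hx.2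
  · simp [e]

lemma letterCount_wordOf_self {T : Fin m × Fin n → Fin (m * n)} (hT : IsSYT T) (i : Fin m)
    (j : Fin n) : letterCount (wordOf T hT.1) (T (i, j)) i = j := by
  have hrow : StrictMono fun j => T (i, j) := fun _ _ h => hT.2.1 _ _ rfl h
  rw [letterCount_wordOf, ← Fin.card_Iio j]
  congr 1
  ext j'
  simp [hrow.lt_iff_lt]

lemma isBallot_wordOf {T : Fin m × Fin n → Fin (m * n)} (hT : IsSYT T) :
    IsBallot (fun _ => n) (wordOf T hT.1) := by
  refine ⟨funext fun i => ?_, fun k i i' hii' => ?_⟩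
  · simp [letterCount_wordOf]
  · simp only [letterCount_wordOf]
    refine card_le_card (monotone_filter_right _ fun j _ hj => ?_)
    rcases hii'.lt_or_eq with hlt | rfl
    · exact (Fin.lt_def.1 (hT.2.2 (i, j) (i', j) rfl hlt)).trans hj
    · exact hj

noncomputable def cellOf (w : Fin (m * n) → Fin m) (hw : letterCount w (m * n) = fun _ => n)
    (k : Fin (m * n)) : Fin m × Fin n :=
  (w k, ⟨letterCount w k (w k), (letterCount_lt_letterCount_succ w k).trans_le <|
    (letterCount_mono w k.isLt _).trans_eq (congrFun hw _)⟩)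

lemma cellOf_bijective (w : Fin (m * n) → Fin m) (hw : letterCount w (m * n) = fun _ => n) :
    Function.Bijective (cellOf w hw) := by
  refine (Fintype.bijective_iff_injective_and_card _).2 ⟨fun k k' h => ?_, by simp⟩
  simp only [cellOf, Prod.mk.injEq, Fin.mk.injEq] at h
  obtain ⟨hwk, hcount⟩ := h
  rcases lt_trichotomy k k' with hlt | heq | hgt
  · exact absurd hcount ((letterCount_lt_iff w k k').2 hlt |>.trans_eq (by rw [hwk])).ne
  · exact heq
  · exact absurd hcount.symm ((letterCount_lt_iff w k' k).2 hgt |>.trans_eq (by rw [hwk])).ne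

noncomputable def tableauOf (w : Fin (m * n) → Fin m) (hw : letterCount w (m * n) = fun _ => n) :
    Fin m × Fin n → Fin (m * n) :=
  (Equiv.ofBijective _ (cellOf_bijective w hw)).symm

lemma cellOf_tableauOf (w : Fin (m * n) → Fin m) (hw : letterCount w (m * n) = fun _ => n)
    (p : Fin m × Fin n) : cellOf w hw (tableauOf w hw p) = p :=
  (Equiv.ofBijective _ (cellOf_bijective w hw)).apply_symm_apply p

lemma apply_tableauOf (w : Fin (m * n) → Fin m) (hw : letterCount w (m * n) = fun _ => n)
    (p : Fin m × Fin n) : w (tableauOf w hw p) = p.1 :=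
  congrArg Prod.fst (cellOf_tableauOf w hw p)

lemma letterCount_tableauOf (w : Fin (m * n) → Fin m) (hw : letterCount w (m * n) = fun _ => n)
    (i : Fin m) (j : Fin n) : letterCount w (tableauOf w hw (i, j)) i = j := by
  have := congrArg (fun p => (p.2 : ℕ)) (cellOf_tableauOf w hw (i, j))
  simpa only [cellOf, apply_tableauOf] using this

lemma isSYT_tableauOf {w : Fin (m * n) → Fin m} (hw : IsBallot (fun _ => n) w) :
    IsSYT (tableauOf w hw.1) := by
  refine ⟨Equiv.bijective _, ?_, ?_⟩
  · rintro ⟨i, j⟩ ⟨i', j'⟩ (rfl : i = i') hjj'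
    rw [← letterCount_lt_iff w, apply_tableauOf w hw.1, letterCount_tableauOf,
      letterCount_tableauOf]
    exact hjj'
  · rintro ⟨i, j⟩ ⟨i', j'⟩ (rfl : j = j') hii'
    set k := tableauOf w hw.1 (i', j)
    have hsucc : letterCount w (k + 1) = letterCount w k + Pi.single i' 1 := by
      rw [letterCount_succ, apply_tableauOf w hw.1]
    rw [← letterCount_lt_iff w, apply_tableauOf w hw.1, letterCount_tableauOf]
    calc (j : ℕ) < letterCount w (k + 1) i' := by simp [hsucc, k, letterCount_tableauOf]
      _ ≤ letterCount w (k + 1) i := hw.2 _ hii'.le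
      _ = letterCount w k i := by simp [hsucc, hii'.ne]

lemma wordOf_tableauOf (w : Fin (m * n) → Fin m) (hw : letterCount w (m * n) = fun _ => n)
    (hT : Function.Bijective (tableauOf w hw)) : wordOf (tableauOf w hw) hT = w := by
  funext k
  have : (Equiv.ofBijective _ hT).symm k = cellOf w hw k := by
    rw [Equiv.symm_apply_eq]
    exact ((Equiv.ofBijective _ (cellOf_bijective w hw)).symm_apply_apply k).symm
  simp only [wordOf, this, cellOf]

lemma tableauOf_wordOf {T : Fin m × Fin n → Fin (m * n)} (hT : IsSYT T) :
    tableauOf (wordOf T hT.1) (isBallot_wordOf hT).1 = T := by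
  funext ⟨i, j⟩
  refine (Equiv.ofBijective _ (cellOf_bijective _ _)).symm_apply_eq.2 ?_
  ext
  · simp [cellOf, wordOf_apply]
  · simp [cellOf, wordOf_apply, letterCount_wordOf_self hT i j]

noncomputable def sytEquivBallot :
    {T : Fin m × Fin n → Fin (m * n) // IsSYT T} ≃
      {w : Fin (m * n) → Fin m // IsBallot (fun _ => n) w} where
  toFun T := ⟨wordOf T.1 T.2.1, isBallot_wordOf T.2⟩
  invFun w := ⟨tableauOf w.1 w.2.1, isSYT_tableauOf w.2⟩
  left_inv T := Subtype.ext (tableauOf_wordOf T.2)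
  right_inv w := Subtype.ext (wordOf_tableauOf w.1 w.2.1 _)

end Tableau

theorem card_mxn_SYT (m n : ℕ) :
    SYTcard m n * ∏ j ∈ Finset.range m, (n + j).factorial =
      (m * n).factorial * ∏ j ∈ Finset.range m, j.factorial := by
  have hcard : (SYTcard m n : ℚ) = (m * n)! * frobeniusDet (fun _ : Fin m => (n : ℤ)) := by
    rw [SYTcard, Nat.card_congr sytEquivBallot]
    exact card_isBallot antitone_const (by simp)
  exact_mod_cast (show (SYTcard m n : ℚ) * ∏ j ∈ range m, ((n + j)! : ℚ) =
    (m * n)! * ∏ j ∈ range m, (j ! : ℚ) by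
      rw [hcard, mul_assoc, frobeniusDet_const_mul_prod_factorial])
end

section
/- An arrangement of r hyperplanes in ℝ^d partitions ℝ^d into at most ∑_{i=0}^{d} binomial(r, i) regions (connected components of the complement of the union of the hyperplanes). -/
/-!
Every sign vector `σ` cuts out a cell `{x | ⟪a i, x⟫ > b i ↔ σ i}`; the cells partition the
complement of the arrangement into convex, hence connected, open pieces, so there are at most as
many regions as realized sign vectors. These are counted by deletion–restriction: a sign vector of
the first `r` hyperplanes extends in both ways to the last hyperplane `H` only if its cell meets
`H`, i.e. only if it is realized by the arrangement induced on `H`, which has one dimension less.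
Thus `f(r + 1, d) ≤ f(r, d) + f(r, d - 1)`, and Pascal's rule gives the bound.
-/

open Finset Module

theorem Nat.sum_range_choose_succ_eq_add (r n : ℕ) :
    ∑ i ∈ range (n + 2), (r + 1).choose i =
      ∑ i ∈ range (n + 2), r.choose i + ∑ i ∈ range (n + 1), r.choose i := by
  simp only [sum_range_succ' _ (n + 1), Nat.choose_succ_succ', sum_add_distrib,
    Nat.choose_zero_right]
  ring

theorem Convex.exists_mem_apply_eq {𝕜 V : Type*} [Field 𝕜] [LinearOrder 𝕜]
    [IsStrictOrderedRing 𝕜] [AddCommGroup V] [Module 𝕜 V] {C : Set V} (hC : Convex 𝕜 C)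
    (f : V →ₗ[𝕜] 𝕜) {p q : V} (hp : p ∈ C) (hq : q ∈ C) {c : 𝕜} (hpc : f p ≤ c)
    (hcq : c ≤ f q) : ∃ x ∈ C, f x = c :=
  (hC.linear_image f).ordConnected.out (Set.mem_image_of_mem f hp) (Set.mem_image_of_mem f hq)
    ⟨hpc, hcq⟩

theorem Set.ncard_eq_ncard_image_init_add {r : ℕ} (S : Set (Fin (r + 1) → Bool)) :
    S.ncard = (Fin.init '' S).ncard +
      {τ : Fin r → Bool | Fin.snoc τ true ∈ S ∧ Fin.snoc τ false ∈ S}.ncard := by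
  let e (v : Bool) (τ : Fin r → Bool) : Fin (r + 1) → Bool := Fin.snoc τ v
  have he_surj (σ : Fin (r + 1) → Bool) : ∃ τ v, σ = e v τ :=
    ⟨_, _, (Fin.snoc_init_self σ).symm⟩
  have he_inj (v : Bool) : Function.Injective (e v) :=
    Fin.snoc_injective2 (α := fun _ => Bool) |>.left v
  have hS : S = e true '' (e true ⁻¹' S) ∪ e false '' (e false ⁻¹' S) := by
    ext σ
    refine ⟨fun hσ => ?_, by rintro (⟨τ, h, rfl⟩ | ⟨τ, h, rfl⟩) <;> exact h⟩
    obtain ⟨τ, _ | _, rfl⟩ := he_surj σ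
    exacts [Or.inr ⟨_, hσ, rfl⟩, Or.inl ⟨_, hσ, rfl⟩]
  have hdisj : Disjoint (e true '' (e true ⁻¹' S)) (e false '' (e false ⁻¹' S)) := by
    refine Set.disjoint_left.2 ?_
    rintro _ ⟨τ, -, rfl⟩ ⟨τ', -, h⟩
    simpa [e] using congr_fun h (Fin.last r)
  have hinit : Fin.init '' S = e true ⁻¹' S ∪ e false ⁻¹' S := by
    ext τ
    constructor
    · rintro ⟨σ, hσ, rfl⟩
      obtain ⟨τ, _ | _, rfl⟩ := he_surj σ <;> simp only [e, Fin.init_snoc]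
      exacts [Or.inr hσ, Or.inl hσ]
    · rintro (h | h) <;> exact ⟨_, h, Fin.init_snoc _ _⟩
  calc S.ncard = (e true ⁻¹' S).ncard + (e false ⁻¹' S).ncard := by
        conv_lhs => rw [hS]
        rw [Set.ncard_union_eq hdisj, Set.ncard_image_of_injective _ (he_inj _),
          Set.ncard_image_of_injective _ (he_inj _)]
    _ = _ := by rw [hinit, ← Set.ncard_union_add_ncard_inter]; rfl

theorem Continuous.connectedComponentsLift_injective {X Y : Type*} [TopologicalSpace X]
    [TopologicalSpace Y] [TotallyDisconnectedSpace Y] {f : X → Y} (hf : Continuous f)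
    (hfiber : ∀ y, IsPreconnected (f ⁻¹' {y})) : Function.Injective hf.connectedComponentsLift := by
  refine ConnectedComponents.surjective_coe.forall₂.2 fun x y hxy => ?_
  rw [hf.connectedComponentsLift_apply_coe, hf.connectedComponentsLift_apply_coe] at hxy
  exact ConnectedComponents.coe_eq_coe'.2 ((hfiber (f y)).subset_connectedComponent rfl hxy)

namespace HyperplaneArrangement

variable {𝕜 V ι : Type*}

section Order

variable [Field 𝕜] [LinearOrder 𝕜] [AddCommGroup V] [Module 𝕜 V]

def signCell (φ : ι → V →ₗ[𝕜] 𝕜) (b : ι → 𝕜) (σ : ι → Bool) : Set V :=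
  ⋂ i, if σ i then {x | b i < φ i x} else {x | φ i x < b i}

def realizedSigns (φ : ι → V →ₗ[𝕜] 𝕜) (b : ι → 𝕜) : Set (ι → Bool) :=
  {σ | (signCell φ b σ).Nonempty}

def signVector (φ : ι → V →ₗ[𝕜] 𝕜) (b : ι → 𝕜) (x : V) : ι → Bool :=
  fun i => decide (b i < φ i x)

variable {φ : ι → V →ₗ[𝕜] 𝕜} {b : ι → 𝕜}

theorem mem_signCell {σ : ι → Bool} {x : V} :
    x ∈ signCell φ b σ ↔ ∀ i, if σ i then b i < φ i x else φ i x < b i := by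
  simp only [signCell, Set.mem_iInter, apply_ite (x ∈ ·), Set.mem_ofPred_eq]

theorem mem_signCell_iff_signVector_eq {σ : ι → Bool} {x : V} (hx : ∀ i, φ i x ≠ b i) :
    x ∈ signCell φ b σ ↔ signVector φ b x = σ := by
  simp only [mem_signCell, funext_iff, signVector]
  refine forall_congr' fun i => ?_
  cases σ i
  · simp [(hx i).le_iff_lt]
  · simp

theorem mem_signCell_snoc {r : ℕ} {φ : Fin (r + 1) → V →ₗ[𝕜] 𝕜} {b : Fin (r + 1) → 𝕜}
    {τ : Fin r → Bool} {v : Bool} {x : V} :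
    x ∈ signCell φ b (Fin.snoc τ v) ↔
      x ∈ signCell (fun i => φ i.castSucc) (fun i => b i.castSucc) τ ∧
        if v then b (Fin.last r) < φ (Fin.last r) x else φ (Fin.last r) x < b (Fin.last r) := by
  simp only [mem_signCell, Fin.forall_fin_succ', Fin.snoc_castSucc, Fin.snoc_last]

theorem image_init_realizedSigns_subset {r : ℕ} (φ : Fin (r + 1) → V →ₗ[𝕜] 𝕜)
    (b : Fin (r + 1) → 𝕜) :
    Fin.init '' realizedSigns φ b ⊆
      realizedSigns (fun i => φ i.castSucc) (fun i => b i.castSucc) := by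
  rintro _ ⟨σ, ⟨x, hx⟩, rfl⟩
  exact ⟨x, mem_signCell.2 fun i => mem_signCell.1 hx i.castSucc⟩

theorem signCell_subset (σ : ι → Bool) : signCell φ b σ ⊆ {x | ∀ i, φ i x ≠ b i} :=
  fun x hx i => by
    have := mem_signCell.1 hx i
    split_ifs at this
    exacts [this.ne', this.ne]

theorem snoc_false_notMem_realizedSigns_of_last_eq_zero {r : ℕ}
    {φ : Fin (r + 1) → V →ₗ[𝕜] 𝕜} {b : Fin (r + 1) → 𝕜} {τ : Fin r → Bool}
    (hφ : φ (Fin.last r) = 0)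
    (ht : Fin.snoc τ true ∈ realizedSigns φ b) : Fin.snoc τ false ∉ realizedSigns φ b := by
  rintro ⟨q, hq⟩
  obtain ⟨p, hp⟩ := ht
  have hp := (mem_signCell_snoc.1 hp).2
  have hq := (mem_signCell_snoc.1 hq).2
  simp only [hφ, LinearMap.zero_apply, if_true, Bool.false_eq_true, if_false] at hp hq
  exact hp.asymm hq

variable [IsStrictOrderedRing 𝕜]

theorem convex_signCell (σ : ι → Bool) : Convex 𝕜 (signCell φ b σ) :=
  convex_iInter fun i => by
    split_ifs
    exacts [convex_halfSpace_gt (φ i).isLinear _, convex_halfSpace_lt (φ i).isLinear _]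

theorem mem_signCell_domRestrict {W : Submodule 𝕜 V} {x₀ : V} {σ : ι → Bool} {w : W} :
    w ∈ signCell (fun i => (φ i).domRestrict W) (fun i => b i - φ i x₀) σ ↔
      (w : V) + x₀ ∈ signCell φ b σ := by
  simp only [mem_signCell, LinearMap.domRestrict_apply, map_add, sub_lt_iff_lt_add,
    lt_sub_iff_add_lt]

theorem mem_realizedSigns_domRestrict_ker_of_snoc_mem {r : ℕ} {φ : Fin (r + 1) → V →ₗ[𝕜] 𝕜}
    {b : Fin (r + 1) → 𝕜} {τ : Fin r → Bool} {x₀ : V}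
    (hx₀ : φ (Fin.last r) x₀ = b (Fin.last r)) (ht : Fin.snoc τ true ∈ realizedSigns φ b)
    (hf : Fin.snoc τ false ∈ realizedSigns φ b) :
    τ ∈ realizedSigns (fun i => (φ i.castSucc).domRestrict (LinearMap.ker (φ (Fin.last r))))
      (fun i => b i.castSucc - φ i.castSucc x₀) := by
  obtain ⟨p, hp⟩ := ht
  obtain ⟨q, hq⟩ := hf
  simp only [mem_signCell_snoc, if_true, Bool.false_eq_true, if_false] at hp hq
  obtain ⟨x, hx, hxb⟩ :=
    (convex_signCell τ).exists_mem_apply_eq (φ (Fin.last r)) hq.1 hp.1 hq.2.le hp.2.le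
  refine ⟨⟨x - x₀, by simp [hxb, hx₀]⟩, mem_signCell_domRestrict.2 ?_⟩
  simpa using hx

theorem ncard_realizedSigns_le [FiniteDimensional 𝕜 V] {r : ℕ} (φ : Fin r → V →ₗ[𝕜] 𝕜)
    (b : Fin r → 𝕜) :
    (realizedSigns φ b).ncard ≤ ∑ i ∈ range (finrank 𝕜 V + 1), r.choose i := by
  induction r generalizing V with
  | zero => simpa [sum_range_succ'] using Set.ncard_le_one_of_subsingleton (realizedSigns φ b)
  | succ r ih =>
    have hinit : (Fin.init '' realizedSigns φ b).ncard ≤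
        ∑ i ∈ range (finrank 𝕜 V + 1), r.choose i :=
      (Set.ncard_le_ncard (image_init_realizedSigns_subset φ b)).trans (ih _ _)
    rw [Set.ncard_eq_ncard_image_init_add]
    by_cases hφ : φ (Fin.last r) = 0
    · have hboth : {τ : Fin r → Bool | Fin.snoc τ true ∈ realizedSigns φ b ∧
          Fin.snoc τ false ∈ realizedSigns φ b} = ∅ :=
        Set.eq_empty_of_forall_notMem fun τ hτ =>
          snoc_false_notMem_realizedSigns_of_last_eq_zero hφ hτ.1 hτ.2
      rw [hboth, Set.ncard_empty, add_zero]
      exact hinit.trans (sum_le_sum fun i _ => Nat.choose_le_succ r i)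
    · obtain ⟨x₀, hx₀⟩ := LinearMap.surjective hφ (b (Fin.last r))
      have hdim := Module.Dual.finrank_ker_add_one_of_ne_zero hφ
      rw [← hdim] at hinit ⊢
      have hboth : {τ : Fin r → Bool | Fin.snoc τ true ∈ realizedSigns φ b ∧
          Fin.snoc τ false ∈ realizedSigns φ b} ⊆ realizedSigns
            (fun i => (φ i.castSucc).domRestrict (LinearMap.ker (φ (Fin.last r))))
            (fun i => b i.castSucc - φ i.castSucc x₀) := fun τ hτ =>
        mem_realizedSigns_domRestrict_ker_of_snoc_mem hx₀ hτ.1 hτ.2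
      calc _ ≤ _ + _ := add_le_add hinit ((Set.ncard_le_ncard hboth).trans (ih _ _))
        _ = _ := (Nat.sum_range_choose_succ_eq_add r _).symm

end Order

section Topology

variable [AddCommGroup V] [Module ℝ V] [TopologicalSpace V] {φ : ι → V →ₗ[ℝ] ℝ} {b : ι → ℝ}

theorem isOpen_signCell [Finite ι] (hφ : ∀ i, Continuous (φ i)) (σ : ι → Bool) :
    IsOpen (signCell φ b σ) :=
  isOpen_iInter_of_finite fun i => by
    split_ifs
    exacts [isOpen_lt continuous_const (hφ i), isOpen_lt (hφ i) continuous_const]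

theorem card_connectedComponents_le_ncard_realizedSigns [Finite ι] [IsTopologicalAddGroup V]
    [ContinuousSMul ℝ V] (hφ : ∀ i, Continuous (φ i)) :
    Nat.card (ConnectedComponents {x : V // ∀ i, φ i x ≠ b i}) ≤ (realizedSigns φ b).ncard := by
  set g : {x : V // ∀ i, φ i x ≠ b i} → ι → Bool := fun x => signVector φ b x
  have hfiber (σ : ι → Bool) : g ⁻¹' {σ} = Subtype.val ⁻¹' signCell φ b σ :=
    Set.ext fun x => (mem_signCell_iff_signVector_eq x.2).symm
  have hg : Continuous g := IsLocallyConstant.continuous <|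
    IsLocallyConstant.iff_isOpen_fiber.2 fun σ =>
      hfiber σ ▸ (isOpen_signCell hφ σ).preimage continuous_subtype_val
  have hinj := hg.connectedComponentsLift_injective fun σ => by
    refine Topology.IsEmbedding.subtypeVal.isInducing.isPreconnected_image.1 ?_
    rw [hfiber, Set.image_preimage_eq_of_subset (Subtype.range_coe_subtype ▸ signCell_subset σ)]
    exact (convex_signCell σ).isPreconnected
  calc Nat.card (ConnectedComponents {x : V // ∀ i, φ i x ≠ b i})
      = (Set.range hg.connectedComponentsLift).ncard := (Set.ncard_range_of_injective hinj).symm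
    _ = (Set.range g).ncard := by
      rw [← ConnectedComponents.surjective_coe.range_comp, hg.connectedComponentsLift_comp_coe]
    _ ≤ (realizedSigns φ b).ncard := Set.ncard_le_ncard <| Set.range_subset_iff.2 fun x =>
      ⟨x, (mem_signCell_iff_signVector_eq x.2).2 rfl⟩

end Topology

end HyperplaneArrangement

theorem hyperplane_arrangement_region_bound_general (d r : ℕ)
    (a : Fin r → EuclideanSpace ℝ (Fin d)) (b : Fin r → ℝ) :
    Nat.card (ConnectedComponents
        {x : EuclideanSpace ℝ (Fin d) // ∀ i : Fin r, inner ℝ (a i) x ≠ b i}) ≤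
      ∑ i ∈ Finset.range (d + 1), r.choose i := by
  let φ i : EuclideanSpace ℝ (Fin d) →ₗ[ℝ] ℝ := innerSL ℝ (a i)
  calc _ ≤ (HyperplaneArrangement.realizedSigns φ b).ncard :=
        HyperplaneArrangement.card_connectedComponents_le_ncard_realizedSigns
          fun i => (innerSL ℝ (a i)).continuous
    _ ≤ _ := by simpa using HyperplaneArrangement.ncard_realizedSigns_le φ b

theorem hyperplane_arrangement_region_bound (d r : ℕ)
    (a : Fin r → EuclideanSpace ℝ (Fin d)) (b : Fin r → ℝ) (ha : ∀ i, a i ≠ 0) :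
    Nat.card (ConnectedComponents
        {x : EuclideanSpace ℝ (Fin d) // ∀ i : Fin r, inner ℝ (a i) x ≠ b i}) ≤
      ∑ i ∈ Finset.range (d + 1), r.choose i :=
  hyperplane_arrangement_region_bound_general d r a b
end

section
/- Let x ∈ ℝ^{m-1} and y ∈ ℝ^n be increasing vectors such that all differences y_i - y_j for i > j are distinct and distinct from all differences x_k - x_ℓ, and such that all entries of the outer sum x ∘ y are distinct. Then the set of total orders on [m]×[n] arising as the order of entries of x' ∘ y, where x' = (x_1,...,x_{m-1}, x_m) ranges over all choices of x_m > x_{m-1} making entries of x' ∘ y distinct, has cardinality at least binomial(n,2) + 1. -/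
/-!
For `t > x_{m-1}` and `j < i`, the entry `t + y_j` comes after `x_{m-1} + y_i` exactly when
`y_i - y_j ≤ t - x_{m-1}`. So the number of pairs `j < i` ordered this way, which is read off
the total order alone, counts the differences `y_i - y_j` lying below `t - x_{m-1}`. Since these
`binomial(n, 2)` differences are distinct and positive, every count `0, …, binomial(n, 2)` occurs,
and `t` can always be chosen off the finite set of values `x_a + y_i - y_j` at which two entries
of the extended outer sum would coincide.
-/

open Finset

def outerSumLT {m n : ℕ} (x : Fin m → ℝ) (y : Fin n → ℝ) (p q : Fin m × Fin n) : Prop :=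
  x p.1 + y p.2 < x q.1 + y q.2

theorem exists_notMem_card_filter_le_eq {α : Type*} [LinearOrder α] [DenselyOrdered α]
    [NoMaxOrder α] {B : Set α} (hB : B.Finite) (D : Finset α) {c : α} (hc : ∀ d ∈ D, c < d)
    {k : ℕ} (hk : k ≤ #D) : ∃ s, c < s ∧ s ∉ B ∧ #{d ∈ D | d ≤ s} = k := by
  classical
  induction D using Finset.induction_on_min generalizing c k with
  | empty =>
    obtain ⟨s, hcs, hsB⟩ := ((Set.Ioi_infinite c).sdiff hB).nonempty
    exact ⟨s, hcs, hsB, by simp_all⟩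
  | insert a D ha ih =>
    have hca : c < a := hc a (mem_insert_self a D)
    have haD : a ∉ D := fun h => lt_irrefl a (ha a h)
    cases k with
    | zero =>
      obtain ⟨s, ⟨hcs, hsa⟩, hsB⟩ := ((Set.Ioo_infinite hca).sdiff hB).nonempty
      refine ⟨s, hcs, hsB, card_eq_zero.2 (filter_eq_empty_iff.2 fun d hd => ?_)⟩
      rcases mem_insert.1 hd with rfl | hd
      · exact not_le.2 hsa
      · exact not_le.2 (hsa.trans (ha d hd))
    | succ j =>
      rw [card_insert_of_notMem haD] at hk
      obtain ⟨s, has, hsB, hj⟩ := ih ha (Nat.le_of_succ_le_succ hk)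
      refine ⟨s, hca.trans has, hsB, ?_⟩
      rw [filter_insert, if_pos has.le, card_insert_of_notMem (fun h => haD (mem_filter.1 h).1), hj]

theorem injective_snoc_add {G ι : Type*} [AddCommGroup G] {m : ℕ} {x : Fin m → G} {y : ι → G}
    (hy : Function.Injective y) (hinj : Function.Injective fun p : Fin m × ι => x p.1 + y p.2)
    {t : G} (ht : ∀ a i j, x a + y i - y j ≠ t) :
    Function.Injective fun p : Fin (m + 1) × ι => (Fin.snoc x t : Fin (m + 1) → G) p.1 + y p.2 := by
  rintro ⟨a, i⟩ ⟨b, j⟩ hab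
  induction a using Fin.lastCases <;> induction b using Fin.lastCases <;>
    simp only [Fin.snoc_last, Fin.snoc_castSucc] at hab
  case last.last => rw [hy (add_left_cancel hab)]
  case last.cast b => exact absurd (by rw [← hab]; abel) (ht b j i)
  case cast.last a => exact absurd (by rw [hab]; abel) (ht a i j)
  case cast.cast a b => cases hinj (a₁ := (a, i)) (a₂ := (b, j)) hab; rfl

section OuterSum

def ascendingPairs (n : ℕ) : Finset (Fin n × Fin n) := {p | p.1 < p.2}

variable {m n : ℕ} (x : Fin m → ℝ) (y : Fin n → ℝ)

noncomputable def shiftedDiffs (c : ℝ) : Finset ℝ :=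
  (ascendingPairs n).image fun p => c + y p.2 - y p.1

def HasDistinctDiffs : Prop :=
  ∀ i j k l : Fin n, j < i → l < k → (i, j) ≠ (k, l) → y i - y j ≠ y k - y l

variable {y}

theorem injOn_shiftedDiffs (hydist : HasDistinctDiffs y) (c : ℝ) :
    Set.InjOn (fun p : Fin n × Fin n => c + y p.2 - y p.1) (ascendingPairs n) := by
  intro p hp q hq hpq
  by_contra hne
  refine hydist p.2 p.1 q.2 q.1 (mem_filter.1 hp).2 (mem_filter.1 hq).2 (fun h => hne ?_)
    (by simpa [add_sub_assoc] using hpq)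
  exact Prod.ext (congrArg Prod.snd h) (congrArg Prod.fst h)

theorem card_shiftedDiffs (hydist : HasDistinctDiffs y) (c : ℝ) :
    #(shiftedDiffs y c) = n.choose 2 := by
  rw [shiftedDiffs, card_image_of_injOn (injOn_shiftedDiffs hydist c), ascendingPairs,
    Fintype.card_product_filter_lt, Fintype.card_fin]

theorem lt_of_mem_shiftedDiffs (hy : StrictMono y) {c d : ℝ} (hd : d ∈ shiftedDiffs y c) :
    c < d := by
  obtain ⟨p, hp, rfl⟩ := mem_image.1 hd
  linarith [hy (mem_filter.1 hp).2]

open Classical in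
theorem card_filter_not_outerSumLT_snoc (hydist : HasDistinctDiffs y) (k₀ : Fin m) (t : ℝ) :
    #{p ∈ ascendingPairs n |
        ¬ outerSumLT (Fin.snoc x t) y (Fin.last m, p.1) (k₀.castSucc, p.2)} =
      #{d ∈ shiftedDiffs y (x k₀) | d ≤ t} := by
  rw [shiftedDiffs, filter_image,
    card_image_of_injOn ((injOn_shiftedDiffs hydist _).mono (coe_subset.2 (filter_subset _ _)))]
  congr 1
  refine filter_congr fun p _ => ?_
  simp only [outerSumLT, Fin.snoc_last, Fin.snoc_castSucc, not_lt]
  constructor <;> intro h <;> linarith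

end OuterSum

theorem single_row_extensions_lower_bound (m n : ℕ) (hm : 1 ≤ m)
    (x : Fin m → ℝ) (y : Fin n → ℝ) (hy : StrictMono y)
    (hydist : ∀ i j k l : Fin n, j < i → l < k → (i, j) ≠ (k, l) →
      y i - y j ≠ y k - y l)
    (hinj : Function.Injective (fun p : Fin m × Fin n => x p.1 + y p.2)) :
    n.choose 2 + 1 ≤
      {R : (Fin (m + 1) × Fin n) → (Fin (m + 1) × Fin n) → Prop |
        ∃ t : ℝ, x ⟨m - 1, by omega⟩ < t ∧
          Function.Injective (fun p : Fin (m + 1) × Fin n =>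
            (Fin.snoc x t : Fin (m + 1) → ℝ) p.1 + y p.2) ∧
          R = fun p q : Fin (m + 1) × Fin n =>
            (Fin.snoc x t : Fin (m + 1) → ℝ) p.1 + y p.2 <
              (Fin.snoc x t : Fin (m + 1) → ℝ) q.1 + y q.2}.ncard := by
  classical
  let cut : ((Fin (m + 1) × Fin n) → (Fin (m + 1) × Fin n) → Prop) → ℕ := fun R =>
    #{p ∈ ascendingPairs n |
      ¬ R (Fin.last m, p.1) (Fin.castSucc ⟨m - 1, by omega⟩, p.2)}
  refine le_trans ?_ (Set.ncard_image_le (f := cut))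
  refine le_trans (by simp) (Set.ncard_le_ncard (s := (range (n.choose 2 + 1) : Set ℕ)) ?_)
  intro k hk
  obtain ⟨t, hxt, htB, hcount⟩ := exists_notMem_card_filter_le_eq
    (Set.finite_range fun z : Fin m × Fin n × Fin n => x z.1 + y z.2.1 - y z.2.2)
    (shiftedDiffs y (x ⟨m - 1, by omega⟩)) (fun _ => lt_of_mem_shiftedDiffs hy) (k := k)
    (by rw [card_shiftedDiffs hydist]; simpa [Nat.lt_succ_iff] using hk)
  exact ⟨_, ⟨t, hxt, injective_snoc_add hy.injective hinj fun a i j h => htB ⟨(a, i, j), h⟩,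
    rfl⟩, (card_filter_not_outerSumLT_snoc x hydist _ t).trans hcount⟩
end

section
/- For all m ≤ n, the number of realizable m×n standard Young tableaux satisfies |rSYT(m,n)| ≤ (1/(m! n!)) * ∑_{i=0}^{m+n} binomial(2*C(m,2)*C(n,2) + C(m,2) + C(n,2), i), where C(a,2) = binomial(a,2). -/
/-!
A realization `(x, y)` of `T`, with coordinates permuted by `(σ, τ) ∈ S_m × S_n`, is a point of
`ℝ^{m+n}`. The set of hyperplanes of the arrangement `x_i + y_j = x_k + y_l` (`i < k`, `j ≠ l`),
`x_i = x_k` (`i < k`), `y_j = y_l` (`j < l`) on whose positive side this point lies determines `σ`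
and `τ` (from the last two families) and then `T` (from the order of all cell sums). Hence
`rSYT(m,n) · m! · n!` is at most the number `B(N, d)` of sets of functionals positive at a common
point, for these `N` functionals on `ℝ^d`, `d = m + n`. Two such sets that differ only at one
functional `g` are attained on both sides of `ker g`, hence, the half-spaces being convex, on
`ker g` itself; so `B(N + 1, d) ≤ B(N, d) + B(N, d - 1)`, which gives `B(N, d) ≤ ∑_{i ≤ d} C(N, i)`.
-/

open Finset Set Function Module
open Equiv (Perm)

section PositiveSet

variable {ι V : Type*} [AddCommGroup V] [Module ℝ V]

def positiveSet (f : ι → Dual ℝ V) (v : V) : Set ι := {i | 0 < f i v}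

theorem positiveSet_eq_of_mem_segment {f : ι → Dual ℝ V} {v w u : V}
    (hvw : positiveSet f w = positiveSet f v) (hu : u ∈ segment ℝ w v) :
    positiveSet f u = positiveSet f v := by
  ext i
  change 0 < f i u ↔ 0 < f i v
  have hi : 0 < f i w ↔ 0 < f i v := Set.ext_iff.mp hvw i
  by_cases hv : 0 < f i v
  · exact iff_of_true ((convex_halfSpace_gt (f i).isLinear 0).segment_subset (hi.2 hv) hv hu) hv
  · refine iff_of_false (not_lt.2 ?_) hv
    exact (convex_halfSpace_le (f i).isLinear 0).segment_subset (not_lt.1 (hv ∘ hi.1))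
      (not_lt.1 hv) hu

theorem exists_mem_segment_apply_eq_zero {g : Dual ℝ V} {v w : V} (hw : g w ≤ 0)
    (hv : 0 ≤ g v) :
    ∃ u ∈ segment ℝ w v, g u = 0 := by
  have : (0 : ℝ) ∈ g.toAffineMap '' segment ℝ w v := by
    rw [image_segment, LinearMap.coe_toAffineMap, segment_eq_Icc (hw.trans hv)]
    exact ⟨hw, hv⟩
  simpa using this

theorem image_positiveSet_pos_inter_nonpos_subset (f : ι → Dual ℝ V) (g : Dual ℝ V) :
    positiveSet f '' {v | 0 < g v} ∩ positiveSet f '' {v | g v ≤ 0} ⊆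
      range (positiveSet fun i => (f i).comp (LinearMap.ker g).subtype) := by
  rintro _ ⟨⟨v, hv, rfl⟩, w, hw, hwv⟩
  obtain ⟨u, hu, hgu⟩ := exists_mem_segment_apply_eq_zero hw.out hv.out.le
  exact ⟨⟨u, hgu⟩, positiveSet_eq_of_mem_segment hwv hu⟩

theorem image_positiveSet_pos_union_nonpos (f : ι → Dual ℝ V) (g : Dual ℝ V) :
    positiveSet f '' {v | 0 < g v} ∪ positiveSet f '' {v | g v ≤ 0} =
      range (positiveSet f) := by
  rw [← image_union, ← image_univ]
  congr 1
  ext v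
  simpa using lt_or_ge 0 (g v)

theorem ncard_range_positiveSet_option_le [Finite ι] (f : Option ι → Dual ℝ V) :
    (range (positiveSet f)).ncard ≤ (positiveSet (f ∘ some) '' {v | 0 < f none v}).ncard +
      (positiveSet (f ∘ some) '' {v | f none v ≤ 0}).ncard := by
  have hpos : ∀ v, 0 < f none v →
      positiveSet f v = insert none (some '' positiveSet (f ∘ some) v) := by
    intro v hv
    ext (_ | i) <;> simp [positiveSet, hv]
  have hnonpos : ∀ v, f none v ≤ 0 → positiveSet f v = some '' positiveSet (f ∘ some) v := by
    intro v hv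
    ext (_ | i) <;> simp [positiveSet, hv]
  have hsub : range (positiveSet f) ⊆
      (fun s => insert none (some '' s)) '' (positiveSet (f ∘ some) '' {v | 0 < f none v}) ∪
        (fun s => some '' s) '' (positiveSet (f ∘ some) '' {v | f none v ≤ 0}) := by
    rintro _ ⟨v, rfl⟩
    rcases lt_or_ge 0 (f none v) with hv | hv
    · exact Or.inl ⟨_, ⟨v, hv, rfl⟩, (hpos v hv).symm⟩
    · exact Or.inr ⟨_, ⟨v, hv, rfl⟩, (hnonpos v hv).symm⟩
  calc (range (positiveSet f)).ncard ≤ _ := ncard_le_ncard hsub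
    _ ≤ _ := ncard_union_le _ _
    _ ≤ _ := add_le_add (ncard_image_le (toFinite _)) (ncard_image_le (toFinite _))

theorem sum_range_choose_succ (N d : ℕ) :
    ∑ i ∈ range (d + 2), (N + 1).choose i =
      ∑ i ∈ range (d + 2), N.choose i + ∑ i ∈ range (d + 1), N.choose i := by
  rw [sum_range_succ', sum_range_succ' (fun i => N.choose i)]
  simp only [Nat.choose_succ_succ', sum_add_distrib, Nat.choose_zero_right]
  ring

theorem ncard_range_positiveSet_le [Finite ι] [FiniteDimensional ℝ V] (f : ι → Dual ℝ V) :
    (range (positiveSet f)).ncard ≤ ∑ i ∈ range (finrank ℝ V + 1), (Nat.card ι).choose i := by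
  induction ι using Finite.induction_empty_option generalizing V with
  | @of_equiv α β e ih =>
    have hrange : range (positiveSet (f ∘ e)) = (e ⁻¹' ·) '' range (positiveSet f) := by
      rw [← range_comp]
      rfl
    have := ih (f ∘ e)
    rwa [hrange, ncard_image_of_injective _ (preimage_injective.2 e.surjective),
      Nat.card_congr e] at this
  | h_empty =>
    calc (range (positiveSet f)).ncard ≤ 1 := ncard_le_one_of_subsingleton _
      _ = ∑ i ∈ range (finrank ℝ V + 1), (Nat.card PEmpty).choose i := by
        simp [sum_range_succ']
  | @h_option α _ ih =>
    set g := f none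
    set A := positiveSet (f ∘ some) '' {v | 0 < g v}
    set B := positiveSet (f ∘ some) '' {v | g v ≤ 0}
    calc (range (positiveSet f)).ncard ≤ A.ncard + B.ncard :=
          ncard_range_positiveSet_option_le f
      _ = (range (positiveSet (f ∘ some))).ncard + (A ∩ B).ncard := by
        rw [← ncard_union_add_ncard_inter, image_positiveSet_pos_union_nonpos]
      _ ≤ ∑ i ∈ range (finrank ℝ V + 1), (Nat.card α).choose i + (A ∩ B).ncard := by
        gcongr
        exact ih _
      _ ≤ ∑ i ∈ range (finrank ℝ V + 1), (Nat.card α + 1).choose i := by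
        by_cases hg : g = 0
        · have hA : A = ∅ := by simp [A, hg]
          simpa [hA] using sum_le_sum fun i _ => Nat.choose_le_succ (Nat.card α) i
        · rw [← Dual.finrank_ker_add_one_of_ne_zero hg, sum_range_choose_succ]
          gcongr
          exact (ncard_le_ncard (image_positiveSet_pos_inter_nonpos_subset _ g)).trans (ih _)
      _ = _ := by rw [Finite.card_option]

end PositiveSet

section OrderType

theorem lt_iff_lt_of_forall_lt {α β γ : Type*} [LinearOrder α] [LinearOrder β] [LinearOrder γ]
    {u : α → β} {v : α → γ} (hu : Injective u) (hv : Injective v)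
    (h : ∀ a b, a < b → (u a < u b ↔ v a < v b)) (a b : α) : u a < u b ↔ v a < v b := by
  rcases lt_trichotomy a b with hab | rfl | hab
  · exact h a b hab
  · simp
  · rw [← not_le, ← not_le, le_iff_lt_or_eq, le_iff_lt_or_eq, h b a hab, hu.eq_iff, hv.eq_iff]

theorem eq_of_bijective_of_lt_iff_lt {α β : Type*} [LinearOrder β] [WellFoundedLT β]
    {f g : α → β} (hf : Bijective f) (hg : Bijective g) (h : ∀ a b, f a < f b ↔ g a < g b) :
    f = g := by
  let e : β ≃o β :=
    { toEquiv := (Equiv.ofBijective f hf).symm.trans (Equiv.ofBijective g hg)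
      map_rel_iff' := by
        intro a b
        obtain ⟨a, rfl⟩ := hf.2 a
        obtain ⟨b, rfl⟩ := hf.2 b
        simp [← not_lt, h] }
  funext a
  simpa [e] using (congrArg (· (f a)) (Subsingleton.elim e (OrderIso.refl β))).symm

theorem perm_eq_of_lt_iff_lt {α β γ : Type*} [LinearOrder α] [WellFoundedLT α] [LinearOrder β]
    [LinearOrder γ] {x : α → β} {x' : α → γ} (hx : StrictMono x) (hx' : StrictMono x')
    {σ σ' : Perm α} (h : ∀ i k, i < k → (x (σ i) < x (σ k) ↔ x' (σ' i) < x' (σ' k))) :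
    σ = σ' := by
  refine Equiv.coe_fn_injective (eq_of_bijective_of_lt_iff_lt σ.bijective σ'.bijective ?_)
  intro i k
  rw [← hx.lt_iff_lt, ← hx'.lt_iff_lt]
  exact lt_iff_lt_of_forall_lt (hx.injective.comp σ.injective) (hx'.injective.comp σ'.injective)
    h i k

end OrderType

theorem Fintype.card_subtype_fst_lt_snd (α : Type*) [Fintype α] [LinearOrder α] :
    Fintype.card {p : α × α // p.1 < p.2} = (Fintype.card α).choose 2 := by
  rw [Fintype.card_subtype, ← Finset.card_univ, ← Finset.card_product_filter_lt,
    univ_product_univ]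

theorem Fintype.card_subtype_fst_ne_snd (α : Type*) [Fintype α] [DecidableEq α] :
    Fintype.card {p : α × α // p.1 ≠ p.2} = 2 * (Fintype.card α).choose 2 := by
  rw [Fintype.card_subtype, ← Finset.card_univ, ← Sym2.card_image_offDiag,
    Sym2.two_mul_card_image_offDiag]
  congr 1
  ext
  simp

section Arrangement

variable {m n : ℕ}

abbrev HyperplaneIndex (m n : ℕ) : Type :=
  ({p : Fin m × Fin m // p.1 < p.2} × {q : Fin n × Fin n // q.1 ≠ q.2}) ⊕
    ({p : Fin m × Fin m // p.1 < p.2} ⊕ {q : Fin n × Fin n // q.1 < q.2})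

def coordFst (i : Fin m) : Dual ℝ ((Fin m → ℝ) × (Fin n → ℝ)) :=
  (LinearMap.proj i).comp (LinearMap.fst ℝ _ _)

def coordSnd (j : Fin n) : Dual ℝ ((Fin m → ℝ) × (Fin n → ℝ)) :=
  (LinearMap.proj j).comp (LinearMap.snd ℝ _ _)

def outerSumArrangement (m n : ℕ) :
    HyperplaneIndex m n → Dual ℝ ((Fin m → ℝ) × (Fin n → ℝ))
  | .inl (p, q) => coordFst p.1.2 + coordSnd q.1.2 - coordFst p.1.1 - coordSnd q.1.1
  | .inr (.inl p) => coordFst p.1.2 - coordFst p.1.1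
  | .inr (.inr q) => coordSnd q.1.2 - coordSnd q.1.1

theorem card_hyperplaneIndex (m n : ℕ) :
    Fintype.card (HyperplaneIndex m n) =
      2 * m.choose 2 * n.choose 2 + m.choose 2 + n.choose 2 := by
  simp only [Fintype.card_sum, Fintype.card_prod, Fintype.card_subtype_fst_lt_snd,
    Fintype.card_subtype_fst_ne_snd, Fintype.card_fin]
  ring

theorem outerSumArrangement_fst_apply {i k : Fin m} (hik : i < k) (a : Fin m → ℝ)
    (b : Fin n → ℝ) :
    outerSumArrangement m n (.inr (.inl ⟨(i, k), hik⟩)) (a, b) = a k - a i :=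
  rfl

theorem outerSumArrangement_snd_apply {j l : Fin n} (hjl : j < l) (a : Fin m → ℝ)
    (b : Fin n → ℝ) :
    outerSumArrangement m n (.inr (.inr ⟨(j, l), hjl⟩)) (a, b) = b l - b j :=
  rfl

theorem exists_outerSumArrangement_eq_sub {c d : Fin m × Fin n} (hcd : toLex c < toLex d) :
    ∃ h, ∀ a b, outerSumArrangement m n h (a, b) = outerSum a b d - outerSum a b c := by
  obtain ⟨i, j⟩ := c
  obtain ⟨k, l⟩ := d
  rcases Prod.Lex.toLex_lt_toLex.1 hcd with hik | ⟨rfl, hjl⟩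
  · by_cases hjl : j = l
    · subst hjl
      refine ⟨.inr (.inl ⟨(i, k), hik⟩), fun a b => ?_⟩
      simp [outerSumArrangement_fst_apply, outerSum]
    · refine ⟨.inl (⟨(i, k), hik⟩, ⟨(j, l), hjl⟩), fun a b => ?_⟩
      simp only [outerSumArrangement, coordFst, coordSnd, outerSum, LinearMap.sub_apply,
        LinearMap.add_apply, LinearMap.comp_apply, LinearMap.fst_apply, LinearMap.snd_apply,
        LinearMap.proj_apply]
      ring
  · refine ⟨.inr (.inr ⟨(j, l), hjl⟩), fun a b => ?_⟩
    simp [outerSumArrangement_snd_apply, outerSum]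

theorem eq_of_positiveSet_outerSumArrangement_eq {T T' : Fin m × Fin n → Fin (m * n)}
    {x x' : Fin m → ℝ} {y y' : Fin n → ℝ} {σ σ' : Perm (Fin m)} {τ τ' : Perm (Fin n)}
    (hT : Bijective T) (hT' : Bijective T') (hR : Realizes x y T) (hR' : Realizes x' y' T')
    (h : positiveSet (outerSumArrangement m n) (x ∘ σ, y ∘ τ) =
      positiveSet (outerSumArrangement m n) (x' ∘ σ', y' ∘ τ')) :
    σ = σ' ∧ τ = τ' ∧ T = T' := by
  obtain ⟨hx, hy, hxy, hTxy⟩ := hR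
  obtain ⟨hx', hy', hxy', hTxy'⟩ := hR'
  have hpos (i : HyperplaneIndex m n) : 0 < outerSumArrangement m n i (x ∘ σ, y ∘ τ) ↔
      0 < outerSumArrangement m n i (x' ∘ σ', y' ∘ τ') :=
    Set.ext_iff.mp h i
  obtain rfl : σ = σ' := perm_eq_of_lt_iff_lt hx hx' fun i k hik => by
    simpa [outerSumArrangement_fst_apply] using hpos (.inr (.inl ⟨(i, k), hik⟩))
  obtain rfl : τ = τ' := perm_eq_of_lt_iff_lt hy hy' fun j l hjl => by
    simpa [outerSumArrangement_snd_apply] using hpos (.inr (.inr ⟨(j, l), hjl⟩))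
  have hcell (c d : Fin m × Fin n) : outerSum (x ∘ σ) (y ∘ τ) c < outerSum (x ∘ σ) (y ∘ τ) d ↔
      outerSum (x' ∘ σ) (y' ∘ τ) c < outerSum (x' ∘ σ) (y' ∘ τ) d := by
    have hz : Injective (outerSum (x ∘ σ) (y ∘ τ)) :=
      hxy.comp (Equiv.prodCongr σ τ).injective
    have hz' : Injective (outerSum (x' ∘ σ) (y' ∘ τ)) :=
      hxy'.comp (Equiv.prodCongr σ τ).injective
    refine lt_iff_lt_of_forall_lt (α := Fin m ×ₗ Fin n) (hz.comp ofLex.injective)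
      (hz'.comp ofLex.injective) (fun c d hcd => ?_) (toLex c) (toLex d)
    obtain ⟨i, hi⟩ := exists_outerSumArrangement_eq_sub (c := ofLex c) (d := ofLex d) hcd
    have := hpos i
    rwa [hi, hi, sub_pos, sub_pos] at this
  refine ⟨rfl, rfl, (Equiv.prodCongr σ τ).surjective.injective_comp_right ?_⟩
  refine eq_of_bijective_of_lt_iff_lt (hT.comp (Equiv.prodCongr σ τ).bijective)
    (hT'.comp (Equiv.prodCongr σ τ).bijective) fun c d => ?_
  exact (hTxy (σ c.1, τ c.2) (σ d.1, τ d.2)).trans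
    ((hcell c d).trans (hTxy' (σ c.1, τ c.2) (σ d.1, τ d.2)).symm)

end Arrangement

abbrev RealizableSYT (m n : ℕ) : Type :=
  {T : Fin m × Fin n → Fin (m * n) // IsSYT T ∧ IsRealizable T}

theorem rSYT_upper_bound_general (m n : ℕ) :
    rSYTcard m n * (m.factorial * n.factorial) ≤
      ∑ i ∈ Finset.range (m + n + 1),
        (2 * m.choose 2 * n.choose 2 + m.choose 2 + n.choose 2).choose i := by
  choose x y hxy using fun T : RealizableSYT m n => T.2.2
  let point (a : RealizableSYT m n × Perm (Fin m) × Perm (Fin n)) : (Fin m → ℝ) × (Fin n → ℝ) :=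
    (x a.1 ∘ a.2.1, y a.1 ∘ a.2.2)
  have hinj : Injective (positiveSet (outerSumArrangement m n) ∘ point) := by
    rintro ⟨T, σ, τ⟩ ⟨T', σ', τ'⟩ h
    obtain ⟨rfl, rfl, hT⟩ :=
      eq_of_positiveSet_outerSumArrangement_eq T.2.1.1 T'.2.1.1 (hxy T) (hxy T') h
    rw [Subtype.ext hT]
  calc rSYTcard m n * (m.factorial * n.factorial)
      = (range (positiveSet (outerSumArrangement m n) ∘ point)).ncard := by
        rw [ncard_range_of_injective hinj]
        simp [rSYTcard, Nat.card_prod, Fintype.card_perm]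
    _ ≤ (range (positiveSet (outerSumArrangement m n))).ncard :=
        ncard_le_ncard (range_comp_subset_range _ _) (toFinite _)
    _ ≤ _ := by
        have := ncard_range_positiveSet_le (outerSumArrangement m n)
        rwa [Nat.card_eq_fintype_card, card_hyperplaneIndex, Module.finrank_prod,
          Module.finrank_fin_fun, Module.finrank_fin_fun] at this

theorem rSYT_upper_bound (m n : ℕ) (hmn : m ≤ n) :
    rSYTcard m n * (m.factorial * n.factorial) ≤
      ∑ i ∈ Finset.range (m + n + 1),
        (2 * m.choose 2 * n.choose 2 + m.choose 2 + n.choose 2).choose i :=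
  rSYT_upper_bound_general m n
end

section
/- Let T be the (m-1)×n standard Young tableau with entries T_{ij} = (j-1)(m-1) + i (column-reading tableau). Then T has at least C_n single-row extensions to realizable m×n tableaux, where C_n is the n-th Catalan number. -/
/-- The column-reading tableau of shape `r × n`, with 1-based entry `(j-1)r + i`
in cell `(i, j)`. -/
def colT (r n : ℕ) : Fin r × Fin n → Fin (r * n) :=
  fun p => ⟨(p.2 : ℕ) * r + (p.1 : ℕ), by
    have h1 := p.1.isLt
    have h2 := p.2.isLt
    calc (p.2 : ℕ) * r + (p.1 : ℕ) < ((p.2 : ℕ) + 1) * r := by nlinarith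
      _ ≤ n * r := by nlinarith
      _ = r * n := Nat.mul_comm _ _⟩

theorem Function.Injective.exists_bijective_fin_lt_iff {α β : Type*} [Fintype α]
    [LinearOrder β] {f : α → β} (hf : Function.Injective f) {N : ℕ}
    (hN : Fintype.card α = N) :
    ∃ T : α → Fin N, Function.Bijective T ∧ ∀ a b, T a < T b ↔ f a < f b := by
  classical
  have hs : (Finset.univ.image f).card = N := by
    rw [Finset.card_image_of_injective _ hf, Finset.card_univ, hN]
  let e := (Finset.univ.image f).orderIsoOfFin hs
  have hmem : ∀ a, f a ∈ Finset.univ.image f := fun a =>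
    Finset.mem_image_of_mem f (Finset.mem_univ a)
  refine ⟨fun a => e.symm ⟨f a, hmem a⟩, ?_, fun a b => e.symm.lt_iff_lt⟩
  rw [Fintype.bijective_iff_injective_and_card, Fintype.card_fin, hN]
  exact ⟨fun a b h => hf (congrArg Subtype.val (e.symm.injective h)), rfl⟩

theorem exists_isSYT_realizes {m n : ℕ} {x : Fin m → ℝ} {y : Fin n → ℝ}
    (hx : StrictMono x) (hy : StrictMono y) (hinj : Function.Injective (outerSum x y)) :
    ∃ T, IsSYT T ∧ Realizes x y T := by
  obtain ⟨T, hT, hlt⟩ := hinj.exists_bijective_fin_lt_iff (N := m * n) (by simp)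
  refine ⟨T, ⟨hT, fun p q h₁ h₂ => ?_, fun p q h₂ h₁ => ?_⟩, hx, hy, hinj, hlt⟩
  · rw [hlt, outerSum, outerSum, h₁]
    exact add_lt_add_right (hy h₂) _
  · rw [hlt, outerSum, outerSum, h₂]
    exact add_lt_add_left (hx h₁) _

theorem Nat.mul_add_lt_mul_add_iff {r i i' j j' : ℕ} (hi : i < r) (hi' : i' < r) :
    j * r + i < j' * r + i' ↔ j < j' ∨ j = j' ∧ i < i' := by
  have hle : ∀ {a b : ℕ}, a < b → a * r + r ≤ b * r := fun h => by
    simpa [Nat.succ_mul] using Nat.mul_le_mul_right r h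
  rcases lt_trichotomy j j' with hj | rfl | hj
  · simp only [hj, true_or, iff_true]
    have := hle hj
    omega
  · simp
  · have := hle hj
    simp only [hj.not_gt, hj.ne', false_and, or_self, iff_false, not_lt]
    omega

theorem colT_lt_colT_iff {r n : ℕ} {p q : Fin r × Fin n} :
    colT r n p < colT r n q ↔ p.2 < q.2 ∨ p.2 = q.2 ∧ p.1 < q.1 := by
  simp only [Fin.lt_def, Fin.ext_iff]
  exact Nat.mul_add_lt_mul_add_iff p.1.2 q.1.2

section Window

variable {α : Type*} [AddCommGroup α] [LinearOrder α] [IsOrderedAddMonoid α]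
  {a b e e' w : α}

theorem add_lt_add_iff_of_lt_abs_sub (h : w < |a - b|) (he : e ∈ Set.Icc 0 w)
    (he' : e' ∈ Set.Icc 0 w) : a + e < b + e' ↔ a < b := by
  constructor
  · intro hlt
    by_contra hba
    rw [abs_of_nonneg (sub_nonneg.2 (not_lt.1 hba))] at h
    exact hlt.not_ge ((add_le_add_right he'.2 b).trans
      ((lt_sub_iff_add_lt'.1 h).le.trans (le_add_of_nonneg_right he.1)))
  · intro hab
    rw [abs_sub_comm, abs_of_pos (sub_pos.2 hab)] at h
    calc a + e ≤ a + w := add_le_add_right he.2 a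
      _ < b := lt_sub_iff_add_lt'.1 h
      _ ≤ b + e' := le_add_of_nonneg_right he'.1

theorem add_ne_add_of_lt_abs_sub (h : w < |a - b|) (he : e ∈ Set.Icc 0 w)
    (he' : e' ∈ Set.Icc 0 w) : a + e ≠ b + e' := by
  intro heq
  have hab : ¬a < b := by rw [← add_lt_add_iff_of_lt_abs_sub h he he', heq]; exact lt_irrefl _
  have hba : ¬b < a := by
    rw [← add_lt_add_iff_of_lt_abs_sub (abs_sub_comm a b ▸ h) he' he, heq]; exact lt_irrefl _
  rw [le_antisymm (not_lt.1 hba) (not_lt.1 hab), sub_self, abs_zero] at h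
  exact h.not_ge (he.1.trans he.2)

end Window

theorem List.count_le_count_take_append {α : Type*} [BEq α] {l l' : List α} {k : ℕ} (a : α)
    (hk : l.length ≤ k) : l.count a ≤ ((l ++ l').take k).count a :=
  (List.prefix_take_iff.2 ⟨List.prefix_append l l', hk⟩).count_le a

open DyckStep

/-- The `i`-th up step of `w` comes before its `j`-th down step (counting from `0`). -/
def UpBeforeDown (w : List DyckStep) (i j : ℕ) : Prop :=
  ∃ k, i < (w.take k).count U ∧ (w.take k).count D ≤ j

section UpBeforeDown

variable {w v : List DyckStep} {i j k : ℕ}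

theorem upBeforeDown_of_lt_of_le (hi : i < w.count U) (hj : w.count D ≤ j) :
    UpBeforeDown w i j :=
  ⟨w.length, by rwa [List.take_length], by rwa [List.take_length]⟩

theorem upBeforeDown_append_iff (hi : i < w.count U) :
    UpBeforeDown (w ++ v) i j ↔ UpBeforeDown w i j := by
  constructor
  · rintro ⟨k, hik, hkj⟩
    rcases le_total k w.length with hk | hk
    · rw [List.take_append_of_le_length hk] at hik hkj
      exact ⟨k, hik, hkj⟩
    · exact upBeforeDown_of_lt_of_le hi ((List.count_le_count_take_append D hk).trans hkj)
  · rintro ⟨k, hik, hkj⟩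
    rcases le_total k w.length with hk | hk
    · rw [← List.take_append_of_le_length (l₂ := v) hk] at hik hkj
      exact ⟨k, hik, hkj⟩
    · rw [List.take_of_length_le hk] at hik hkj
      exact ⟨w.length, by simpa using hik, by simpa using hkj⟩

theorem upBeforeDown_append_U_iff : UpBeforeDown (w ++ [U]) (w.count U) j ↔ w.count D ≤ j := by
  constructor
  · rintro ⟨k, hik, hkj⟩
    rcases le_total k w.length with hk | hk
    · rw [List.take_append_of_le_length hk] at hik
      exact absurd ((List.take_sublist k w).count_le U) hik.not_ge
    · exact (List.count_le_count_take_append D hk).trans hkj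
  · intro hj
    have hw : (w ++ [U]).take (w.length + 1) = w ++ [U] := List.take_of_length_le (by simp)
    exact ⟨w.length + 1, by simp [hw], by simpa [hw]⟩

theorem upBeforeDown_of_getElem_eq_U (hk : k < w.length) (h : w[k] = U) :
    UpBeforeDown w ((w.take k).count U) ((w.take k).count D) :=
  ⟨k + 1, by simp [List.take_succ_eq_append_getElem hk, h],
    by simp [List.take_succ_eq_append_getElem hk, h]⟩

theorem not_upBeforeDown_of_getElem_eq_D (hk : k < w.length) (h : w[k] = D) :
    ¬UpBeforeDown w ((w.take k).count U) ((w.take k).count D) := by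
  rintro ⟨k', hU, hD⟩
  rcases le_or_gt k' k with hk' | hk'
  · exact hU.not_ge ((List.take_prefix_take_left hk').count_le U)
  · have := (List.take_prefix_take_left (l := w) hk').count_le D
    simp [List.take_succ_eq_append_getElem hk, h] at this
    omega

/-- The separating pair counts the up and down steps of the common prefix. -/
theorem exists_upBeforeDown_and_not {w' : List DyckStep} (htake : w.take k = w'.take k)
    (hk : k < w.length) (hk' : k < w'.length) (hU : w[k] = U) (hD : w'[k] = D) :
    ∃ i < w.count U, ∃ j < w'.count D, UpBeforeDown w i j ∧ ¬UpBeforeDown w' i j := by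
  refine ⟨_, ?_, _, ?_, upBeforeDown_of_getElem_eq_U hk hU,
    htake ▸ not_upBeforeDown_of_getElem_eq_D hk' hD⟩
  · have := (List.take_sublist (k + 1) w).count_le U
    simp [List.take_succ_eq_append_getElem hk, hU] at this
    omega
  · have := (List.take_sublist (k + 1) w').count_le D
    simp [List.take_succ_eq_append_getElem hk', hD, ← htake] at this
    omega

end UpBeforeDown

theorem DyckWord.eq_of_upBeforeDown_iff {p q : DyckWord} (hpq : p.semilength = q.semilength)
    (h : ∀ i < p.semilength, ∀ j < p.semilength, UpBeforeDown p i j ↔ UpBeforeDown q i j) :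
    p = q := by
  have hlen : p.toList.length = q.toList.length := by
    rw [← p.two_mul_semilength_eq_length, ← q.two_mul_semilength_eq_length, hpq]
  have hpU : p.toList.count U = p.semilength := rfl
  have hqU : q.toList.count U = p.semilength := hpq.symm
  have hpD : p.toList.count D = p.semilength := p.semilength_eq_count_D.symm
  have hqD : q.toList.count D = p.semilength := by rw [← semilength_eq_count_D, hpq]
  have htake : ∀ k, p.toList.take k = q.toList.take k := by
    intro k
    induction k with
    | zero => simp
    | succ k ih =>
      rcases le_or_gt p.toList.length k with hk | hk
      · rwa [List.take_of_length_le (by omega), List.take_of_length_le (by omega),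
          ← List.take_of_length_le (l := p.toList) hk,
          ← List.take_of_length_le (l := q.toList) (hlen ▸ hk)]
      have hk' : k < q.toList.length := hlen ▸ hk
      rw [List.take_succ_eq_append_getElem hk, List.take_succ_eq_append_getElem hk', ih]
      rcases p.toList[k].dichotomy with hp | hp <;> rcases q.toList[k].dichotomy with hq | hq
      · rw [hp, hq]
      · obtain ⟨i, hi, j, hj, h₁, h₂⟩ := exists_upBeforeDown_and_not ih hk hk' hp hq
        exact absurd ((h i (hpU ▸ hi) j (hqD ▸ hj)).1 h₁) h₂
      · obtain ⟨i, hi, j, hj, h₁, h₂⟩ := exists_upBeforeDown_and_not ih.symm hk' hk hq hp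
        exact absurd ((h i (hqU ▸ hi) j (hpD ▸ hj)).2 h₁) h₂
      · rw [hp, hq]
  ext1
  simpa [List.take_of_length_le, hlen] using htake p.toList.length

/-- The points `y i` (one per up step of `w`) and `y j + 1` (one per down step) interleave
as the steps of `w`; the `y j + 1` of down steps not yet in `w` lie above all points `y i`. -/
def ShiftRealizes (w : List DyckStep) (y : ℕ → ℝ) : Prop :=
  StrictMonoOn y (Set.Iio (w.count U)) ∧
    ∀ i < w.count U, ∀ j < w.count U,
      (UpBeforeDown w i j → y i < y j + 1) ∧ (¬UpBeforeDown w i j → y j + 1 < y i)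

namespace ShiftRealizes

variable {w : List DyckStep} {y : ℕ → ℝ}

theorem append_D (h : ShiftRealizes w y) : ShiftRealizes (w ++ [D]) y := by
  have hc : (w ++ [D]).count U = w.count U := by simp
  refine ⟨hc ▸ h.1, fun i hi j hj => ?_⟩
  rw [hc] at hi hj
  rw [upBeforeDown_append_iff hi]
  exact h.2 i hi j hj

theorem exists_append_U (hw : w.count D ≤ w.count U) (h : ShiftRealizes w y) :
    ∃ y', ShiftRealizes (w ++ [U]) y' := by
  obtain ⟨hmono, hy⟩ := h
  set a := w.count U
  set b := w.count D
  -- the new point lies above every merged point and below every pending `y j + 1`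
  obtain ⟨t, hlo, hhi⟩ := Finset.exists_between'
    ((Finset.range a).image y ∪ (Finset.range b).image (y · + 1))
    ((Finset.Ico b a).image (y · + 1)) (by
      simp only [Finset.mem_union, Finset.mem_image, Finset.mem_range, Finset.mem_Ico]
      rintro _ (⟨i, hi, rfl⟩ | ⟨i, hi, rfl⟩) _ ⟨j, ⟨hbj, hja⟩, rfl⟩
      · exact (hy i hi j hja).1 (upBeforeDown_of_lt_of_le hi hbj)
      · exact add_lt_add_left (hmono (hi.trans_le (hbj.trans hja.le)) hja (hi.trans_le hbj)) 1)
  simp only [Finset.mem_union, Finset.mem_image, Finset.mem_range, Finset.mem_Ico] at hlo hhi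
  have hyt : ∀ i < a, y i < t := fun i hi => hlo _ (.inl ⟨i, hi, rfl⟩)
  have hupd : ∀ i < a, Function.update y a t i = y i := fun i hi =>
    Function.update_of_ne hi.ne _ _
  have hc : (w ++ [U]).count U = a + 1 := by simp [a]
  refine ⟨Function.update y a t, ?_, ?_⟩
  · rw [hc]
    intro i hi i' hi' hii'
    rcases Nat.lt_succ_iff_lt_or_eq.1 hi' with hi' | rfl
    · rw [hupd i (hii'.trans hi'), hupd i' hi']
      exact hmono (hii'.trans hi') hi' hii'
    · rw [hupd i hii', Function.update_self]
      exact hyt i hii'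
  rw [hc]
  intro i hi j hj
  rcases Nat.lt_succ_iff_lt_or_eq.1 hi with hi | rfl <;>
    rcases Nat.lt_succ_iff_lt_or_eq.1 hj with hj | rfl
  · rw [upBeforeDown_append_iff hi, hupd i hi, hupd j hj]
    exact hy i hi j hj
  · rw [upBeforeDown_append_iff hi, hupd i hi, Function.update_self]
    exact ⟨fun _ => (hyt i hi).trans (lt_add_one t),
      fun hn => absurd (upBeforeDown_of_lt_of_le hi hw) hn⟩
  · rw [upBeforeDown_append_U_iff, hupd j hj, Function.update_self]
    exact ⟨fun hbj => hhi _ ⟨j, ⟨hbj, hj⟩, rfl⟩,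
      fun hbj => hlo _ (.inr ⟨j, not_le.1 hbj, rfl⟩)⟩
  · rw [upBeforeDown_append_U_iff, Function.update_self]
    exact ⟨fun _ => lt_add_one t, fun hn => absurd hw hn⟩

end ShiftRealizes

theorem exists_shiftRealizes (w : List DyckStep)
    (hw : ∀ v, v <+: w → v.count D ≤ v.count U) : ∃ y, ShiftRealizes w y := by
  induction w using List.reverseRecOn with
  | nil => exact ⟨0, fun _ h => absurd h (Nat.not_lt_zero _), by simp⟩
  | append_singleton w s ih =>
    obtain ⟨y, hy⟩ := ih fun v hv => hw v (hv.trans (List.prefix_append w [s]))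
    cases s
    · exact hy.exists_append_U (hw w (List.prefix_append w [U]))
    · exact ⟨y, hy.append_D⟩

theorem DyckWord.exists_strictMono_lt_add_one_iff (p : DyckWord) :
    ∃ y : Fin p.semilength → ℝ, StrictMono y ∧ (∀ i j, y i ≠ y j + 1) ∧
      ∀ i j, y i < y j + 1 ↔ UpBeforeDown p i j := by
  obtain ⟨y, hmono, hy⟩ := exists_shiftRealizes p.toList fun v hv => by
    rw [List.prefix_iff_eq_take.1 hv]
    exact p.count_D_le_count_U _
  refine ⟨fun i => y i, fun i j hij => hmono i.2 j.2 hij, fun i j => ?_, fun i j => ?_⟩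
  · by_cases hij : UpBeforeDown p i j
    exacts [((hy i i.2 j j.2).1 hij).ne, ((hy i i.2 j j.2).2 hij).ne']
  · exact ⟨fun hlt => by_contra fun hn => ((hy i i.2 j j.2).2 hn).not_gt hlt,
      (hy i i.2 j j.2).1⟩

noncomputable def windowVector (r : ℕ) (w : ℝ) : Fin (r + 1) → ℝ :=
  Fin.lastCases 1 fun i => w * i / r

section WindowVector

variable {r n : ℕ} {w : ℝ} {y : Fin n → ℝ}

@[simp]
theorem windowVector_last : windowVector r w (Fin.last r) = 1 :=
  Fin.lastCases_last

@[simp]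
theorem windowVector_castSucc (i : Fin r) : windowVector r w i.castSucc = w * i / r :=
  Fin.lastCases_castSucc i

theorem windowVector_zero (hr : 1 ≤ r) : windowVector r w 0 = 0 := by
  rw [show (0 : Fin (r + 1)) = Fin.castSucc ⟨0, hr⟩ from rfl, windowVector_castSucc]
  simp

theorem windowVector_castSucc_mem_Icc (hw : 0 ≤ w) (i : Fin r) :
    windowVector r w i.castSucc ∈ Set.Icc 0 w := by
  have hr : (0 : ℝ) < r := by exact_mod_cast i.pos
  have hi : (i : ℝ) ≤ r := by exact_mod_cast i.2.le
  rw [windowVector_castSucc]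
  exact ⟨by positivity, (div_le_iff₀ hr).2 (mul_le_mul_of_nonneg_left hi hw)⟩

theorem windowVector_castSucc_lt_castSucc_iff (hw : 0 < w) {i i' : Fin r} :
    windowVector r w i.castSucc < windowVector r w i'.castSucc ↔ i < i' := by
  have hr : (0 : ℝ) < r := by exact_mod_cast i.pos
  rw [windowVector_castSucc, windowVector_castSucc, div_lt_div_iff_of_pos_right hr,
    mul_lt_mul_iff_right₀ hw, Nat.cast_lt, Fin.lt_def]

theorem strictMono_windowVector (hw0 : 0 < w) (hw1 : w < 1) : StrictMono (windowVector r w) := by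
  intro a b hab
  induction b using Fin.lastCases with
  | last =>
    obtain ⟨a, rfl⟩ := Fin.exists_castSucc_eq.2 hab.ne
    exact windowVector_last (w := w) ▸ (windowVector_castSucc_mem_Icc hw0.le a).2.trans_lt hw1
  | cast b =>
    obtain ⟨a, rfl⟩ := Fin.exists_castSucc_eq.2 (hab.trans (Fin.castSucc_lt_last b)).ne
    exact (windowVector_castSucc_lt_castSucc_iff hw0).2 (Fin.castSucc_lt_castSucc_iff.1 hab)

theorem outerSum_windowVector_castSucc_lt_iff (hw0 : 0 < w) (hy : StrictMono y)
    (hgap : ∀ j j', j ≠ j' → w < |y j - y j'|) (p q : Fin r × Fin n) :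
    outerSum (windowVector r w) y (p.1.castSucc, p.2) <
        outerSum (windowVector r w) y (q.1.castSucc, q.2) ↔ colT r n p < colT r n q := by
  rw [colT_lt_colT_iff]
  simp only [outerSum]
  rcases eq_or_ne p.2 q.2 with hj | hj
  · rw [hj, add_lt_add_iff_right, windowVector_castSucc_lt_castSucc_iff hw0]
    simp
  · rw [add_comm, add_comm (windowVector _ _ _), add_lt_add_iff_of_lt_abs_sub (hgap _ _ hj)
      (windowVector_castSucc_mem_Icc hw0.le _) (windowVector_castSucc_mem_Icc hw0.le _),
      hy.lt_iff_lt]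
    simp [hj]

theorem injective_outerSum_windowVector (hw0 : 0 < w) (hw1 : w < 1) (hy : StrictMono y)
    (hgap : ∀ j j', j ≠ j' → w < |y j - y j'|) (hshift : ∀ j j', w < |y j - (y j' + 1)|) :
    Function.Injective (outerSum (windowVector r w) y) := by
  have hlast : ∀ (i : Fin r) j j', windowVector r w i.castSucc + y j ≠ 1 + y j' := by
    intro i j j' h
    refine add_ne_add_of_lt_abs_sub (hshift j j') (windowVector_castSucc_mem_Icc hw0.le i)
      ⟨le_rfl, hw0.le⟩ ?_
    linarith
  rintro ⟨i, j⟩ ⟨i', j'⟩ h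
  simp only [outerSum] at h
  induction i using Fin.lastCases with
  | last =>
    induction i' using Fin.lastCases with
    | last => simpa using hy.injective (by simpa using h)
    | cast i' => exact absurd (windowVector_last (w := w) ▸ h.symm) (hlast i' j' j)
  | cast i =>
    induction i' using Fin.lastCases with
    | last => exact absurd (windowVector_last (w := w) ▸ h) (hlast i j j')
    | cast i' =>
      rcases eq_or_ne j j' with rfl | hj
      · rw [(strictMono_windowVector hw0 hw1).injective (add_right_cancel h)]
      · refine absurd ?_ (add_ne_add_of_lt_abs_sub (hgap j j' hj)
          (windowVector_castSucc_mem_Icc hw0.le i) (windowVector_castSucc_mem_Icc hw0.le i'))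
        linarith

end WindowVector

open Filter Topology in
theorem exists_pos_lt_gaps {n : ℕ} {y : Fin n → ℝ} (hy : Function.Injective y)
    (hy1 : ∀ i j, y i ≠ y j + 1) :
    ∃ w, 0 < w ∧ w < 1 ∧ (∀ j j', j ≠ j' → w < |y j - y j'|) ∧
      ∀ j j', w < |y j - (y j' + 1)| := by
  have hgap : ∀ j j', ∀ᶠ w in 𝓝 (0 : ℝ), j ≠ j' → w < |y j - y j'| := fun j j' => by
    by_cases h : j = j'
    · exact .of_forall fun _ hne => absurd h hne
    · exact (eventually_lt_nhds (abs_pos.2 (sub_ne_zero.2 (hy.ne h)))).mono fun _ hw _ => hw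
  have hshift : ∀ j j', ∀ᶠ w in 𝓝 (0 : ℝ), w < |y j - (y j' + 1)| := fun j j' =>
    eventually_lt_nhds (abs_pos.2 (sub_ne_zero.2 (hy1 j j')))
  have h := (eventually_lt_nhds one_pos).and
    ((eventually_all.2 fun j => eventually_all.2 (hgap j)).and
      (eventually_all.2 fun j => eventually_all.2 (hshift j)))
  obtain ⟨w, hw, hw0⟩ := ((h.filter_mono nhdsWithin_le_nhds).and
    (self_mem_nhdsWithin (s := Set.Ioi (0 : ℝ)))).exists
  exact ⟨w, hw0, hw⟩

def IsSingleRowExtension {r n : ℕ} (T : Fin r × Fin n → Fin (r * n))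
    (T' : Fin (r + 1) × Fin n → Fin ((r + 1) * n)) : Prop :=
  IsSYT T' ∧ IsRealizable T' ∧
    ∀ p q : Fin r × Fin n, T' (p.1.castSucc, p.2) < T' (q.1.castSucc, q.2) ↔ T p < T q

theorem exists_isSingleRowExtension_colT {r n : ℕ} (hr : 1 ≤ r) {y : Fin n → ℝ}
    (hy : StrictMono y) (hy1 : ∀ i j, y i ≠ y j + 1) :
    ∃ T', IsSingleRowExtension (colT r n) T' ∧
      ∀ i j, T' (0, i) < T' (Fin.last r, j) ↔ y i < y j + 1 := by
  obtain ⟨w, hw0, hw1, hgap, hshift⟩ := exists_pos_lt_gaps hy.injective hy1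
  obtain ⟨T', hT', hxy⟩ := exists_isSYT_realizes (strictMono_windowVector (r := r) hw0 hw1) hy
    (injective_outerSum_windowVector hw0 hw1 hy hgap hshift)
  refine ⟨T', ⟨hT', ⟨_, _, hxy⟩, fun p q => ?_⟩, fun i j => ?_⟩
  · rw [hxy.2.2.2]
    exact outerSum_windowVector_castSucc_lt_iff hw0 hy hgap p q
  · rw [hxy.2.2.2]
    simp [outerSum, windowVector_zero hr, add_comm]

theorem DyckWord.exists_isSingleRowExtension_colT {r : ℕ} (hr : 1 ≤ r) (p : DyckWord) :
    ∃ T', IsSingleRowExtension (colT r p.semilength) T' ∧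
      ∀ i j, T' (0, i) < T' (Fin.last r, j) ↔ UpBeforeDown p i j := by
  obtain ⟨y, hy, hy1, hyp⟩ := p.exists_strictMono_lt_add_one_iff
  obtain ⟨T', hT', hT'y⟩ := _root_.exists_isSingleRowExtension_colT hr hy hy1
  exact ⟨T', hT', fun i j => (hT'y i j).trans (hyp i j)⟩

theorem column_reading_tableau_many_extensions (r n : ℕ) (hr : 1 ≤ r) :
    catalan n ≤ Nat.card {T' : Fin (r + 1) × Fin n → Fin ((r + 1) * n) //
      IsSYT T' ∧ IsRealizable T' ∧
      ∀ p q : Fin r × Fin n,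
        T' (p.1.castSucc, p.2) < T' (q.1.castSucc, q.2) ↔ colT r n p < colT r n q} := by
  change catalan n ≤ Nat.card {T' // IsSingleRowExtension (colT r n) T'}
  have key : ∀ p : {p : DyckWord // p.semilength = n},
      ∃ T', IsSingleRowExtension (colT r n) T' ∧
        ∀ i j : Fin n, T' (0, i) < T' (Fin.last r, j) ↔ UpBeforeDown p.1 i j := by
    rintro ⟨p, rfl⟩
    exact p.exists_isSingleRowExtension_colT hr
  choose T' hT' hT'up using key
  have hinj : Function.Injective
      fun p => (⟨T' p, hT' p⟩ : {T' // IsSingleRowExtension (colT r n) T'}) := by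
    intro p q hpq
    refine Subtype.ext (DyckWord.eq_of_upBeforeDown_iff (p.2.trans q.2.symm) fun i hi j hj => ?_)
    rw [p.2] at hi hj
    rw [← hT'up p ⟨i, hi⟩ ⟨j, hj⟩, ← hT'up q ⟨i, hi⟩ ⟨j, hj⟩,
      show T' p = T' q from congrArg Subtype.val hpq]
  calc catalan n = Nat.card {p : DyckWord // p.semilength = n} := by
        rw [Nat.card_eq_fintype_card, DyckWord.card_dyckWord_semilength_eq_catalan]
    _ ≤ _ := Nat.card_le_card_of_injective _ hinj
end

section
/- Let S_{m,n,k} = {x ∈ Π_{m+n} : x_1 + ... + x_m = k}, where Π_{m+n} is the permutahedron (convex hull of all permutations of (1,2,...,m+n)). A point x is a vertex of S_{m,n,k} only if it is a vertex of Π_{m+n} or lies on an edge of Π_{m+n}; and when x is a vertex of Π_{m+n} with ∑_{i≤m} x_i = k, the quantity k - binomial(m+1,2) equals the number of inversions between the first m and last n positions: k - binomial(m+1,2) = |{(i,j) : i ≤ m < j, x_i > x_j}|. -/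
open Set Finset

/-- The vertex of the permutahedron corresponding to a permutation `σ`:
coordinate `i` equals `σ i + 1 ∈ {1, …, N}`. -/
def permPoint (N : ℕ) (σ : Equiv.Perm (Fin N)) : Fin N → ℝ :=
  fun i => (σ i : ℕ) + 1

/-- The permutahedron `Π_N`: the convex hull of all permutations of `(1, 2, …, N)`. -/
def Permutohedron (N : ℕ) : Set (Fin N → ℝ) :=
  convexHull ℝ {x | ∃ σ : Equiv.Perm (Fin N), x = permPoint N σ}

lemma card_val_lt {N c : ℕ} (hc : c ≤ N) :
    (Finset.univ.filter fun i : Fin N => (i : ℕ) < c).card = c := by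
  rw [← Finset.card_range c]
  refine Finset.card_bij' (fun (i : Fin N) _ => (i : ℕ))
    (fun v hv => (⟨v, lt_of_lt_of_le (Finset.mem_range.mp hv) hc⟩ : Fin N))
    ?_ ?_ ?_ ?_
  · intro a ha; simpa using (Finset.mem_filter.mp ha).2
  · intro v hv; simp [Finset.mem_range.mp hv]
  · intro a ha; simp
  · intro v hv; simp

lemma sigma_val_eq {N : ℕ} (σ : Equiv.Perm (Fin N)) (i : Fin N) :
    (σ i : ℕ) = (Finset.univ.filter fun j => σ j < σ i).card := by
  have h1 : (Finset.univ.filter fun j => σ j < σ i) =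
      (Finset.univ.filter fun v : Fin N => v < σ i).map σ.symm.toEmbedding := by
    ext j
    simp only [Finset.mem_map, Finset.mem_filter, Finset.mem_univ, true_and,
      Equiv.coe_toEmbedding]
    constructor
    · intro hj; exact ⟨σ j, hj, σ.symm_apply_apply j⟩
    · rintro ⟨v, hv, rfl⟩; simpa using hv
  have h2 : (Finset.univ.filter fun v : Fin N => v < σ i) =
      (Finset.univ.filter fun v : Fin N => (v : ℕ) < ((σ i : Fin N) : ℕ)) := by
    simp only [Fin.lt_def]
  rw [h1, Finset.card_map, h2, card_val_lt (le_of_lt (σ i).isLt)]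

lemma card_pairs {N m : ℕ} (σ : Equiv.Perm (Fin N)) (hm : m ≤ N) :
    (Finset.univ.filter fun p : Fin N × Fin N =>
       (p.1 : ℕ) < m ∧ (p.2 : ℕ) < m ∧ σ p.2 < σ p.1).card = m.choose 2 := by
  set A := Finset.univ.filter fun p : Fin N × Fin N =>
       (p.1 : ℕ) < m ∧ (p.2 : ℕ) < m ∧ σ p.2 < σ p.1 with hA
  set B := Finset.univ.filter fun p : Fin N × Fin N =>
       (p.1 : ℕ) < m ∧ (p.2 : ℕ) < m ∧ σ p.1 < σ p.2 with hB
  set full := Finset.univ.filter fun p : Fin N × Fin N =>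
       (p.1 : ℕ) < m ∧ (p.2 : ℕ) < m with hfull
  have hAB : A.card = B.card := by
    apply Finset.card_bij (fun p _ => p.swap)
    · intro p hp
      simp only [hA, hB, Finset.mem_filter, Finset.mem_univ, true_and] at hp ⊢
      exact ⟨hp.2.1, hp.1, hp.2.2⟩
    · intro p hp q hq h
      simpa [Prod.ext_iff] using congrArg Prod.swap h
    · intro p hp
      refine ⟨p.swap, ?_, by simp⟩
      simp only [hA, hB, Finset.mem_filter, Finset.mem_univ, true_and] at hp ⊢
      exact ⟨hp.2.1, hp.1, hp.2.2⟩
  have hfull_card : full.card = m * m := by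
    have : full = (Finset.univ.filter fun i : Fin N => (i : ℕ) < m) ×ˢ
        (Finset.univ.filter fun i : Fin N => (i : ℕ) < m) := by
      ext p; simp [hfull, Finset.mem_product, and_comm]
    rw [this, Finset.card_product, card_val_lt hm]
  have hsplit1 : (full.filter fun p => σ p.2 < σ p.1).card +
      (full.filter fun p => ¬ σ p.2 < σ p.1).card = full.card :=
    Finset.card_filter_add_card_filter_not _
  have hsplit2 : ((full.filter fun p => ¬ σ p.2 < σ p.1).filter fun p => σ p.1 < σ p.2).card +
      ((full.filter fun p => ¬ σ p.2 < σ p.1).filter fun p => ¬ σ p.1 < σ p.2).card =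
      (full.filter fun p => ¬ σ p.2 < σ p.1).card :=
    Finset.card_filter_add_card_filter_not _
  have e1 : full.filter (fun p => σ p.2 < σ p.1) = A := by
    simp only [hfull, hA, Finset.filter_filter, and_assoc]
  have e2 : (full.filter fun p => ¬ σ p.2 < σ p.1).filter (fun p => σ p.1 < σ p.2) = B := by
    rw [Finset.filter_filter, Finset.filter_filter]
    simp only [hfull, hB]
    apply Finset.filter_congr
    intro p _
    constructor
    · rintro ⟨⟨h1, h2⟩, _, h3⟩; exact ⟨h1, h2, h3⟩
    · rintro ⟨h1, h2, h3⟩; exact ⟨⟨h1, h2⟩, asymm h3, h3⟩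
  have e3 : ((full.filter fun p => ¬ σ p.2 < σ p.1).filter fun p => ¬ σ p.1 < σ p.2).card = m := by
    rw [Finset.filter_filter]
    have heq : (full.filter fun p => ¬σ p.2 < σ p.1 ∧ ¬σ p.1 < σ p.2) =
        (Finset.univ.filter fun i : Fin N => (i : ℕ) < m).image (fun i => (i, i)) := by
      ext p
      simp only [hfull, Finset.filter_filter, Finset.mem_filter, Finset.mem_univ, true_and,
        Finset.mem_image]
      constructor
      · rintro ⟨⟨h1, h2⟩, h3, h4⟩
        have hss : σ p.1 = σ p.2 := le_antisymm (not_lt.mp h3) (not_lt.mp h4)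
        have hp : p.1 = p.2 := σ.injective hss
        exact ⟨p.1, h1, Prod.ext_iff.mpr ⟨rfl, hp⟩⟩
      · rintro ⟨i, hi, rfl⟩
        exact ⟨⟨hi, hi⟩, by simp⟩
    rw [heq, Finset.card_image_of_injective _ (fun a b h => (Prod.ext_iff.mp h).1),
      card_val_lt hm]
  rw [e1] at hsplit1
  rw [e2, e3] at hsplit2
  have hmm : m * (m - 1) = m * m - m := by
    cases m with
    | zero => simp
    | succ t => simp [Nat.succ_sub_one, Nat.mul_succ]
  have hc2 := Nat.choose_two_right m
  omega

lemma part2 (m n k : ℕ) (σ : Equiv.Perm (Fin (m + n)))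
    (h : (∑ i ∈ Finset.univ.filter (fun i : Fin (m + n) => (i : ℕ) < m), ((σ i : ℕ) + 1)) = k) :
    k = (m + 1).choose 2 +
      (Finset.univ.filter (fun p : Fin (m + n) × Fin (m + n) =>
        (p.1 : ℕ) < m ∧ m ≤ (p.2 : ℕ) ∧ σ p.2 < σ p.1)).card := by
  have hm : m ≤ m + n := Nat.le_add_right m n
  have hcardS : (Finset.univ.filter fun i : Fin (m + n) => (i : ℕ) < m).card = m :=
    card_val_lt hm
  rw [Finset.sum_add_distrib, Finset.sum_const, hcardS, smul_eq_mul, mul_one] at h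
  have key : ∑ i ∈ Finset.univ.filter (fun i : Fin (m + n) => (i : ℕ) < m), (σ i : ℕ) =
      (Finset.univ.filter fun p : Fin (m + n) × Fin (m + n) =>
        (p.1 : ℕ) < m ∧ (p.2 : ℕ) < m ∧ σ p.2 < σ p.1).card +
      (Finset.univ.filter (fun p : Fin (m + n) × Fin (m + n) =>
        (p.1 : ℕ) < m ∧ m ≤ (p.2 : ℕ) ∧ σ p.2 < σ p.1)).card := by
    have lhs : ∑ i ∈ Finset.univ.filter (fun i : Fin (m + n) => (i : ℕ) < m), (σ i : ℕ) =
        ∑ i : Fin (m + n), ∑ j : Fin (m + n), (if (i : ℕ) < m ∧ σ j < σ i then 1 else 0) := by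
      rw [Finset.sum_filter]
      refine Finset.sum_congr rfl fun i _ => ?_
      by_cases hi : (i : ℕ) < m
      · simp only [hi, if_true, true_and]
        rw [sigma_val_eq σ i, Finset.card_filter]
      · simp [hi]
    rw [lhs, Finset.card_filter, Finset.card_filter, Fintype.sum_prod_type,
      Fintype.sum_prod_type, ← Finset.sum_add_distrib]
    refine Finset.sum_congr rfl fun i _ => ?_
    rw [← Finset.sum_add_distrib]
    refine Finset.sum_congr rfl fun j _ => ?_
    by_cases h1 : (i : ℕ) < m <;> by_cases h2 : (j : ℕ) < m <;> by_cases h3 : σ j < σ i <;>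
      simp [h1, h2, h3, Nat.not_lt.mp, not_le.mpr, le_of_not_gt]
  rw [key, card_pairs σ hm] at h
  have hch : (m + 1).choose 2 = m + m.choose 2 := by
    rw [Nat.choose_succ_succ, Nat.choose_one_right]
  omega

set_option maxHeartbeats 1000000 in
theorem extreme_slice {E : Type*} [NormedAddCommGroup E] [NormedSpace ℝ E]
    {P : Set E} (hcomp : IsCompact P) (hconv : Convex ℝ P)
    (f : E →ₗ[ℝ] ℝ) {k : ℝ} {x : E}
    (hx : x ∈ Set.extremePoints ℝ (P ∩ {y | f y = k})) :
    x ∈ Set.extremePoints ℝ P ∨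
      ∃ u v : E, u ≠ v ∧ x ∈ segment ℝ u v ∧ IsExtreme ℝ P (segment ℝ u v) := by
  obtain ⟨⟨hxP, hxH⟩, hxext⟩ := hx
  classical
  set D : Set E := {d | ∃ ε : ℝ, 0 < ε ∧ x + ε • d ∈ P ∧ x - ε • d ∈ P} with hD
  have hshrink : ∀ (d : E), ∀ ε' : ℝ, 0 < ε' →
      (∃ ε : ℝ, ε' ≤ ε ∧ x + ε • d ∈ P ∧ x - ε • d ∈ P) →
      x + ε' • d ∈ P ∧ x - ε' • d ∈ P := by
    intro d ε' hε' ⟨ε, hle, h1, h2⟩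
    have hεpos : (0:ℝ) < ε := lt_of_lt_of_le hε' hle
    have hc1 : 0 ≤ 1 - ε'/ε := by
      have : ε'/ε ≤ 1 := (div_le_one hεpos).mpr hle
      linarith
    have hc2 : 0 ≤ ε'/ε := le_of_lt (div_pos hε' hεpos)
    have hsum : (1 - ε'/ε) + ε'/ε = 1 := by ring
    have hfs : (ε'/ε) * ε = ε' := by field_simp
    constructor
    · have h := hconv hxP h1 hc1 hc2 hsum
      convert h using 1
      match_scalars <;> simp <;> linarith [hfs]
    · have h := hconv hxP h2 hc1 hc2 hsum
      convert h using 1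
      match_scalars <;> simp <;> linarith [hfs]
  have hDsmul : ∀ d ∈ D, ∀ c : ℝ, c • d ∈ D := by
    intro d ⟨ε, hε, h1, h2⟩ c
    rcases lt_trichotomy c 0 with hc | hc | hc
    · have hc0 : c ≠ 0 := ne_of_lt hc
      have hcd : (ε / (-c)) • (c • d) = (-ε) • d := by
        rw [smul_smul]; congr 1
        rw [div_mul_eq_mul_div, div_eq_iff (by simpa using hc0)]; ring
      refine ⟨ε / (-c), div_pos hε (by linarith), ?_, ?_⟩
      · rw [hcd]; simpa [sub_eq_add_neg, neg_smul] using h2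
      · rw [hcd]; simpa [neg_smul, sub_neg_eq_add] using h1
    · subst hc; exact ⟨1, one_pos, by simpa using hxP, by simpa using hxP⟩
    · have hc0 : c ≠ 0 := ne_of_gt hc
      have hcd : (ε / c) • (c • d) = ε • d := by
        rw [smul_smul]; congr 1; field_simp
      refine ⟨ε / c, div_pos hε hc, ?_, ?_⟩
      · rw [hcd]; exact h1
      · rw [hcd]; exact h2
  have hDadd : ∀ d ∈ D, ∀ e ∈ D, d + e ∈ D := by
    intro d ⟨ε₁, hε₁, hd1, hd2⟩ e ⟨ε₂, hε₂, he1, he2⟩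
    set ε := min ε₁ ε₂ with hε
    have hεpos : 0 < ε := lt_min hε₁ hε₂
    have hd := hshrink d ε hεpos ⟨ε₁, min_le_left _ _, hd1, hd2⟩
    have he := hshrink e ε hεpos ⟨ε₂, min_le_right _ _, he1, he2⟩
    refine ⟨ε/2, by linarith, ?_, ?_⟩
    · have h := hconv hd.1 he.1 (by norm_num : (0:ℝ) ≤ 1/2) (by norm_num : (0:ℝ) ≤ 1/2)
        (by norm_num)
      convert h using 1
      match_scalars <;> ring
    · have h := hconv hd.2 he.2 (by norm_num : (0:ℝ) ≤ 1/2) (by norm_num : (0:ℝ) ≤ 1/2)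
        (by norm_num)
      convert h using 1
      match_scalars <;> ring
  have hDker : ∀ d ∈ D, f d = 0 → d = 0 := by
    intro d ⟨ε, hε, h1, h2⟩ hfd
    have m1 : x + ε • d ∈ P ∩ {y | f y = k} := by
      refine ⟨h1, ?_⟩
      simp only [Set.mem_setOf_eq, map_add, map_smul, hfd, smul_eq_mul, mul_zero, add_zero]
      exact hxH
    have m2 : x - ε • d ∈ P ∩ {y | f y = k} := by
      refine ⟨h2, ?_⟩
      simp only [Set.mem_setOf_eq, map_sub, map_smul, hfd, smul_eq_mul, mul_zero, sub_zero]
      exact hxH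
    have hseg : x ∈ openSegment ℝ (x + ε • d) (x - ε • d) := by
      refine ⟨1/2, 1/2, by norm_num, by norm_num, by norm_num, ?_⟩
      match_scalars <;> ring
    have := hxext m1 m2 hseg
    have h0 : ε • d = 0 := by
      have := this
      have : x + ε • d - x = 0 := by rw [this]; abel
      simpa using this
    rcases smul_eq_zero.mp h0 with h | h
    · exact absurd h (ne_of_gt hε)
    · exact h
  by_cases hD0 : ∀ d ∈ D, d = 0
  · -- x is an extreme point of P
    left
    refine ⟨hxP, ?_⟩
    intro x1 h1 x2 h2 hseg
    obtain ⟨a, b, ha, hb, hab, hsum⟩ := hseg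
    have hmin : (0:ℝ) < min a b := lt_min ha hb
    have hdD : x2 - x1 ∈ D := by
      refine ⟨min a b, hmin, ?_, ?_⟩
      · have h := hconv h1 h2 (sub_nonneg.mpr (min_le_left a b))
          (le_of_lt (add_pos hb hmin)) (by linarith)
        convert h using 1
        rw [← hsum]; match_scalars <;> ring
      · have h := hconv h1 h2 (le_of_lt (add_pos ha hmin))
          (sub_nonneg.mpr (min_le_right a b))
          (by linarith)
        convert h using 1
        rw [← hsum]; match_scalars <;> ring
    have h0 : x2 - x1 = 0 := hD0 _ hdD
    have hx12 : x2 = x1 := sub_eq_zero.mp h0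
    have hx1 : x1 = x := by
      rw [← hsum, hx12, ← add_smul, hab, one_smul]
    exact hx1
  · push_neg at hD0
    obtain ⟨d, hdD, hd0⟩ := hD0
    right
    have hfd : f d ≠ 0 := fun h => hd0 (hDker d hdD h)
    have hspan : ∀ e ∈ D, ∃ c : ℝ, e = c • d := by
      intro e he
      have h1 : (f d) • e + (-(f e)) • d ∈ D :=
        hDadd _ (hDsmul e he (f d)) _ (hDsmul d hdD (-(f e)))
      have h2 : f ((f d) • e + (-(f e)) • d) = 0 := by
        simp only [map_add, map_smul, smul_eq_mul]; ring
      have h3 := hDker _ h1 h2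
      have h4 : (f d) • e = (f e) • d := by
        have h5 : (f d) • e - (f e) • d = 0 := by rw [← h3]; module
        exact sub_eq_zero.mp h5
      refine ⟨f e / f d, ?_⟩
      calc e = (1 / f d) • ((f d) • e) := by rw [smul_smul]; field_simp; rw [one_smul]
        _ = (1 / f d) • ((f e) • d) := by rw [h4]
        _ = (f e / f d) • d := by rw [smul_smul]; congr 1; field_simp
    obtain ⟨ε, hε, hεp1, hεp2⟩ := hdD
    set T : Set ℝ := {t | x + t • d ∈ P} with hT
    have hT0 : (0:ℝ) ∈ T := by simp only [hT, Set.mem_setOf_eq, zero_smul, add_zero]; exact hxP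
    have hTne : T.Nonempty := ⟨0, hT0⟩
    have hmap : Continuous (fun t : ℝ => x + t • d) := by fun_prop
    have hTclosed : IsClosed T := hcomp.isClosed.preimage hmap
    set g : ℝ →ᵃ[ℝ] E := AffineMap.lineMap x (x + d) with hg
    have hgapp : ∀ t : ℝ, g t = x + t • d := by
      intro t
      simp only [hg, AffineMap.lineMap_apply_module]
      module
    have hTconv : Convex ℝ T := by
      have h := hconv.affine_preimage g
      have : T = g ⁻¹' P := by ext t; simp [Set.mem_preimage, hgapp t, hT]
      rw [this]; exact h
    obtain ⟨M, hM⟩ := hcomp.isBounded.exists_norm_le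
    have hdnorm : 0 < ‖d‖ := norm_pos_iff.mpr hd0
    have habs_bd : ∀ t ∈ T, |t| ≤ (M + ‖x‖) / ‖d‖ := by
      intro t ht
      rw [le_div_iff₀ hdnorm]
      have h1 : ‖t • d‖ = |t| * ‖d‖ := by rw [norm_smul, Real.norm_eq_abs]
      have h2 : ‖(x + t • d) - x‖ ≤ ‖x + t • d‖ + ‖x‖ := norm_sub_le _ _
      have h3 : (x + t • d) - x = t • d := by abel
      have h4 := hM _ ht
      rw [h3, h1] at h2
      linarith
    have hTbddA : BddAbove T := ⟨(M + ‖x‖) / ‖d‖, fun t ht => le_trans (le_abs_self t) (habs_bd t ht)⟩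
    have hTbddB : BddBelow T := ⟨-((M + ‖x‖) / ‖d‖), fun t ht => by
      have := habs_bd t ht
      have := neg_abs_le t
      linarith⟩
    set a := sInf T with ha
    set b := sSup T with hb
    have ha_mem : a ∈ T := hTclosed.csInf_mem hTne hTbddB
    have hb_mem : b ∈ T := hTclosed.csSup_mem hTne hTbddA
    have hmemε : ε ∈ T := hεp1
    have hmemnegε : (-ε) ∈ T := by
      simp only [hT, Set.mem_setOf_eq, neg_smul]
      rw [← sub_eq_add_neg]; exact hεp2
    have ha_neg : a < 0 := lt_of_le_of_lt (csInf_le hTbddB hmemnegε) (neg_lt_zero.mpr hε)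
    have hb_pos : 0 < b := lt_of_lt_of_le hε (le_csSup hTbddA hmemε)
    have hab : a < b := lt_trans ha_neg hb_pos
    have hTIcc : T = Set.Icc a b := by
      apply Set.Subset.antisymm
      · exact fun t ht => ⟨csInf_le hTbddB ht, le_csSup hTbddA ht⟩
      · exact (hTconv.ordConnected).out ha_mem hb_mem
    set u := x + a • d with hu
    set v := x + b • d with hv
    have huv : u ≠ v := by
      intro h
      have h1 : (a - b) • d = 0 := by
        rw [sub_smul, sub_eq_zero]
        exact add_left_cancel (hu ▸ hv ▸ h)
      rcases smul_eq_zero.mp h1 with h | h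
      · exact absurd (sub_eq_zero.mp h) (ne_of_lt hab)
      · exact hd0 h
    have hseg_eq : segment ℝ u v = (fun t : ℝ => x + t • d) '' Set.Icc a b := by
      have h1 : u = g a := (hgapp a).symm
      have h2 : v = g b := (hgapp b).symm
      rw [h1, h2, ← image_segment, segment_eq_Icc (le_of_lt hab)]
      exact Set.image_congr (fun t _ => (hgapp t).symm) |>.symm
    have hsubP : segment ℝ u v ⊆ P := by
      rw [hseg_eq]
      rintro _ ⟨t, ht, rfl⟩
      have : t ∈ T := hTIcc ▸ ht
      exact this
    have hxseg : x ∈ segment ℝ u v := by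
      rw [hseg_eq]
      exact ⟨0, ⟨le_of_lt ha_neg, le_of_lt hb_pos⟩, by simp⟩
    refine ⟨u, v, huv, hxseg, hsubP, ?_⟩
    intro p hp q hq w hwseg hwopen
    rw [hseg_eq] at hwseg
    obtain ⟨t, htI, rfl⟩ := hwseg
    obtain ⟨θ₁, θ₂, hθ₁, hθ₂, hsum1, hcomb0⟩ := hwopen
    have hcomb : θ₁ • p + θ₂ • q = x + t • d := hcomb0
    set e : E := q - p with he
    set r := min θ₁ θ₂ with hr
    have hrpos : 0 < r := lt_min hθ₁ hθ₂
    have hw1 : (x + t • d) + r • e ∈ P := by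
      have h := hconv hp hq (sub_nonneg.mpr (min_le_left θ₁ θ₂))
        (le_of_lt (add_pos hθ₂ hrpos)) (by linarith)
      convert h using 1
      rw [← hcomb, he]; match_scalars <;> ring
    have hw2 : (x + t • d) - r • e ∈ P := by
      have h := hconv hp hq (le_of_lt (add_pos hθ₁ hrpos))
        (sub_nonneg.mpr (min_le_right θ₁ θ₂)) (by linarith)
      convert h using 1
      rw [← hcomb, he]; match_scalars <;> ring
    have heD : e ∈ D := by
      obtain ⟨lam, hlam⟩ : ∃ l : ℝ, l = ε / (ε + |t| + 1) := ⟨_, rfl⟩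
      have hZ : (0:ℝ) < ε + |t| + 1 := by positivity
      have hZ' : ε + |t| + 1 ≠ 0 := ne_of_gt hZ
      have hlam0 : 0 < lam := by rw [hlam]; exact div_pos hε hZ
      have hlam1 : lam < 1 := by rw [hlam, div_lt_one hZ]; linarith [abs_nonneg t]
      have h1lam : 0 < 1 - lam := by linarith
      have hden : (0:ℝ) < (1 - lam) * ε := mul_pos h1lam hε
      have habs : |lam * t| ≤ (1 - lam) * ε := by
        rw [abs_mul, abs_of_pos hlam0, hlam]
        rw [div_mul_eq_mul_div, div_le_iff₀ hZ]
        have h0 := abs_nonneg t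
        have hq1 : (1 - ε / (ε + |t| + 1)) = (|t| + 1) / (ε + |t| + 1) := by
          field_simp; ring
        rw [hq1]
        have hrw : (|t| + 1) / (ε + |t| + 1) * ε * (ε + |t| + 1) = (|t| + 1) * ε := by
          field_simp
        rw [hrw]
        nlinarith
      obtain ⟨μ, hμ⟩ : ∃ u : ℝ, u = (1 - lam * t / ((1 - lam) * ε)) / 2 := ⟨_, rfl⟩
      have hXb := abs_le.mp habs
      have hX1 : lam * t / ((1 - lam) * ε) ≤ 1 := by
        rw [div_le_one hden]; exact hXb.2
      have hX2 : -1 ≤ lam * t / ((1 - lam) * ε) := by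
        rw [le_div_iff₀ hden]; linarith [hXb.1]
      have hμ0 : 0 ≤ μ := by rw [hμ]; linarith
      have hμ1 : μ ≤ 1 := by rw [hμ]; linarith
      have hkey : μ * ((1 - lam) * ε) - (1 - μ) * ((1 - lam) * ε) = -(lam * t) := by
        rw [hμ]; field_simp; ring
      have hq1 : lam • ((x + t • d) + r • e) + (1 - lam) • (x + ε • d) ∈ P :=
        hconv hw1 hεp1 hlam0.le (by linarith) (by ring)
      have hq2 : lam • ((x + t • d) + r • e) + (1 - lam) • (x - ε • d) ∈ P :=
        hconv hw1 hεp2 hlam0.le (by linarith) (by ring)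
      have hq3 : lam • ((x + t • d) - r • e) + (1 - lam) • (x + ε • d) ∈ P :=
        hconv hw2 hεp1 hlam0.le (by linarith) (by ring)
      have hq4 : lam • ((x + t • d) - r • e) + (1 - lam) • (x - ε • d) ∈ P :=
        hconv hw2 hεp2 hlam0.le (by linarith) (by ring)
      have hplus : x + (lam * r) • e ∈ P := by
        have h := hconv (a := μ) (b := 1 - μ) hq1 hq2 hμ0 (by linarith) (by ring)
        convert h using 1
        match_scalars
        any_goals ring
        all_goals linear_combination -hkey
      have hminus : x - (lam * r) • e ∈ P := by
        have h := hconv (a := μ) (b := 1 - μ) hq3 hq4 hμ0 (by linarith) (by ring)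
        convert h using 1
        match_scalars
        any_goals ring
        all_goals linear_combination -hkey
      exact ⟨lam * r, mul_pos hlam0 hrpos, hplus, hminus⟩
    obtain ⟨c, hc⟩ := hspan e heD
    have h6 : q = p + c • d := by rw [← hc, he]; abel
    have h7 : p + (θ₂ * c) • d = x + t • d := by
      rw [← hcomb, h6]
      match_scalars
      any_goals ring
      all_goals linear_combination -hsum1
    have hpw : p = x + (t - θ₂ * c) • d := by
      have h8 := eq_sub_of_add_eq h7
      rw [h8]; match_scalars <;> ring
    have hqw : q = x + (t - θ₂ * c + c) • d := by
      rw [h6, hpw]; match_scalars <;> ring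
    have htp : (t - θ₂ * c) ∈ T := by
      show x + (t - θ₂ * c) • d ∈ P
      rw [← hpw]; exact hp
    have htq : (t - θ₂ * c + c) ∈ T := by
      show x + (t - θ₂ * c + c) • d ∈ P
      rw [← hqw]; exact hq
    rw [hseg_eq]; exact ⟨t - θ₂ * c, hTIcc ▸ htp, hpw.symm⟩

theorem slice_vertices (m n k : ℕ) :
    (∀ x ∈ Set.extremePoints ℝ
        (Permutohedron (m + n) ∩
          {x : Fin (m + n) → ℝ |
            ∑ i ∈ Finset.univ.filter (fun i : Fin (m + n) => (i : ℕ) < m), x i = (k : ℝ)}),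
      x ∈ Set.extremePoints ℝ (Permutohedron (m + n)) ∨
        ∃ u v : Fin (m + n) → ℝ, u ≠ v ∧ x ∈ segment ℝ u v ∧
          IsExtreme ℝ (Permutohedron (m + n)) (segment ℝ u v)) ∧
    (∀ σ : Equiv.Perm (Fin (m + n)),
      (∑ i ∈ Finset.univ.filter (fun i : Fin (m + n) => (i : ℕ) < m), ((σ i : ℕ) + 1)) = k →
      k = (m + 1).choose 2 +
        (Finset.univ.filter (fun p : Fin (m + n) × Fin (m + n) =>
          (p.1 : ℕ) < m ∧ m ≤ (p.2 : ℕ) ∧ σ p.2 < σ p.1)).card) := by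
  constructor
  · intro x hx
    have hfin : ({x | ∃ σ : Equiv.Perm (Fin (m + n)), x = permPoint (m + n) σ} :
        Set (Fin (m + n) → ℝ)).Finite := by
      have : ({x | ∃ σ : Equiv.Perm (Fin (m + n)), x = permPoint (m + n) σ} :
          Set (Fin (m + n) → ℝ)) = Set.range (permPoint (m + n)) := by
        ext y; simp [Set.range, eq_comm]
      rw [this]; exact Set.finite_range _
    have hcomp : IsCompact (Permutohedron (m + n)) := hfin.isCompact_convexHull ℝ
    have hconv : Convex ℝ (Permutohedron (m + n)) := convex_convexHull ℝ _
    set S := Finset.univ.filter (fun i : Fin (m + n) => (i : ℕ) < m) with hS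
    let f : (Fin (m + n) → ℝ) →ₗ[ℝ] ℝ :=
      { toFun := fun y => ∑ i ∈ S, y i
        map_add' := by intro y z; simp [Finset.sum_add_distrib]
        map_smul' := by intro c y; simp [Finset.mul_sum] }
    have hset : {x : Fin (m + n) → ℝ | ∑ i ∈ S, x i = (k : ℝ)} = {y | f y = (k : ℝ)} := rfl
    rw [hset] at hx
    exact extreme_slice hcomp hconv f hx
  · exact part2 m n k
end
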